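/- arXiv:1612.02503 — 8 statements merged into one kernel-verified Lean document; each statement's English description precedes it below -/
import Mathlib

section
/- Let H = ([n], E) be a hypergraph in which every vertex belongs to at least one edge, and let c : E → ℝ with c_F ≥ 0 for all F ∈ E. Then the supremum of h([n]) over all nonnegative, monotone, subadditive set functions h on [n] with h(∅) = 0 satisfying h(F) ≤ c_F for every F ∈ E equals the minimum of Σ_{F∈E} λ_F·c_F over all integral edge covers λ of H (and this minimum is attained). -/
/-- Subadditive set functions are bounded by sums over covering families. -/
lemma subadd_cover_bound {α : Type*} [DecidableEq α] (g : Finset α → ℝ) (h0 : g ∅ = 0)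
    (hmono : ∀ ⦃S T : Finset α⦄, S ⊆ T → g S ≤ g T)
    (hsub : ∀ S T, g (S ∪ T) ≤ g S + g T) :
    ∀ (A : Finset (Finset α)) (S : Finset α), S ⊆ A.biUnion id → g S ≤ ∑ F ∈ A, g F := by
  intro A
  induction A using Finset.induction_on with
  | empty =>
      intro S hS
      simp only [Finset.biUnion_empty, Finset.subset_empty] at hS
      simp [hS, h0]
  | @insert F A hFA ih =>
      intro S hS
      rw [Finset.biUnion_insert] at hS
      calc g S ≤ g (F ∪ A.biUnion id) := hmono hS
        _ ≤ g F + g (A.biUnion id) := hsub _ _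
        _ ≤ g F + ∑ F ∈ A, g F := by
            have := ih (A.biUnion id) (le_refl _)
            linarith
        _ = ∑ F' ∈ insert F A, g F' := (Finset.sum_insert hFA).symm

/-- **Integral edge cover bound for subadditive set functions.**
For a hypergraph `([n], E)` in which every vertex is covered by some edge and
nonnegative edge weights `c`, the supremum of `h [n]` over all nonnegative,
monotone, subadditive set functions `h` with `h ∅ = 0` and `h F ≤ c F` for
every edge `F ∈ E` equals the minimum of `∑_{F ∈ E} λ_F · c_F` over all
integral edge covers `λ`, and this minimum is attained. -/
theorem subadditive_bound_eq_integral_edge_cover {n : ℕ} (hn : 0 < n)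
    (E : Finset (Finset (Fin n)))
    (hE : ∀ F ∈ E, F.Nonempty)
    (hEcov : ∀ v : Fin n, ∃ F ∈ E, v ∈ F)
    (c : Finset (Fin n) → ℝ) (hc : ∀ F ∈ E, 0 ≤ c F) :
    IsLeast
      {x : ℝ | ∃ lam : Finset (Fin n) → ℕ,
          (∀ v : Fin n, 1 ≤ ∑ F ∈ E.filter (fun F => v ∈ F), lam F) ∧
          x = ∑ F ∈ E, (lam F : ℝ) * c F}
      (sSup {x : ℝ | ∃ h : Finset (Fin n) → ℝ,
          h ∅ = 0 ∧ (∀ S, 0 ≤ h S) ∧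
          (∀ ⦃S T : Finset (Fin n)⦄, S ⊆ T → h S ≤ h T) ∧
          (∀ S T : Finset (Fin n), h (S ∪ T) ≤ h S + h T) ∧
          (∀ F ∈ E, h F ≤ c F) ∧ x = h Finset.univ}) := by
  classical
  -- covering subfamilies of E
  set covs : Finset (Fin n) → Finset (Finset (Finset (Fin n))) :=
    fun S => E.powerset.filter (fun A => S ⊆ A.biUnion id) with hcovs
  have hmemcovs : ∀ S A, A ∈ covs S ↔ A ⊆ E ∧ S ⊆ A.biUnion id := by
    intro S A
    simp [hcovs, Finset.mem_filter, Finset.mem_powerset]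
  have hne : ∀ S, (covs S).Nonempty := by
    intro S
    refine ⟨E, (hmemcovs S E).mpr ⟨le_refl _, fun v hv => ?_⟩⟩
    obtain ⟨F, hF, hvF⟩ := hEcov v
    exact Finset.mem_biUnion.mpr ⟨F, hF, hvF⟩
  set h : Finset (Fin n) → ℝ :=
    fun S => (((covs S).image (fun A => ∑ F ∈ A, c F)).min' ((hne S).image _)) with hdef
  have h_le : ∀ S A, A ∈ covs S → h S ≤ ∑ F ∈ A, c F := by
    intro S A hA
    exact Finset.min'_le _ _ (Finset.mem_image_of_mem _ hA)
  have h_ex : ∀ S, ∃ A ∈ covs S, h S = ∑ F ∈ A, c F := by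
    intro S
    have := Finset.min'_mem ((covs S).image (fun A => ∑ F ∈ A, c F)) ((hne S).image _)
    obtain ⟨A, hA, hAeq⟩ := Finset.mem_image.mp this
    exact ⟨A, hA, hAeq.symm⟩
  have h_nonneg : ∀ S, 0 ≤ h S := by
    intro S
    obtain ⟨A, hA, hAeq⟩ := h_ex S
    rw [hAeq]
    exact Finset.sum_nonneg fun F hF => hc F (((hmemcovs S A).mp hA).1 hF)
  have h_empty : h ∅ = 0 := by
    have h1 : h ∅ ≤ 0 := by
      have : (∅ : Finset (Finset (Fin n))) ∈ covs ∅ :=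
        (hmemcovs _ _).mpr ⟨Finset.empty_subset _, by simp⟩
      simpa using h_le ∅ ∅ this
    exact le_antisymm h1 (h_nonneg ∅)
  have h_mono : ∀ ⦃S T : Finset (Fin n)⦄, S ⊆ T → h S ≤ h T := by
    intro S T hST
    obtain ⟨A, hA, hAeq⟩ := h_ex T
    rw [hAeq]
    obtain ⟨h1, h2⟩ := (hmemcovs T A).mp hA
    exact h_le S A ((hmemcovs S A).mpr ⟨h1, hST.trans h2⟩)
  have h_sub : ∀ S T : Finset (Fin n), h (S ∪ T) ≤ h S + h T := by
    intro S T
    obtain ⟨A, hA, hAeq⟩ := h_ex S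
    obtain ⟨B, hB, hBeq⟩ := h_ex T
    obtain ⟨hA1, hA2⟩ := (hmemcovs S A).mp hA
    obtain ⟨hB1, hB2⟩ := (hmemcovs T B).mp hB
    have hAB : A ∪ B ∈ covs (S ∪ T) := by
      refine (hmemcovs _ _).mpr ⟨Finset.union_subset hA1 hB1, ?_⟩
      intro v hv
      rcases Finset.mem_union.mp hv with hv | hv
      · obtain ⟨F, hF, hvF⟩ := Finset.mem_biUnion.mp (hA2 hv)
        exact Finset.mem_biUnion.mpr ⟨F, Finset.mem_union_left _ hF, hvF⟩
      · obtain ⟨F, hF, hvF⟩ := Finset.mem_biUnion.mp (hB2 hv)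
        exact Finset.mem_biUnion.mpr ⟨F, Finset.mem_union_right _ hF, hvF⟩
    have key : ∑ F ∈ A ∪ B, c F ≤ ∑ F ∈ A, c F + ∑ F ∈ B, c F := by
      have := Finset.sum_union_inter (s₁ := A) (s₂ := B) (f := c)
      have hnn : 0 ≤ ∑ F ∈ A ∩ B, c F :=
        Finset.sum_nonneg fun F hF => hc F (hA1 (Finset.mem_inter.mp hF).1)
      linarith
    calc h (S ∪ T) ≤ ∑ F ∈ A ∪ B, c F := h_le _ _ hAB
      _ ≤ ∑ F ∈ A, c F + ∑ F ∈ B, c F := key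
      _ = h S + h T := by rw [hAeq, hBeq]
  have h_edge : ∀ F ∈ E, h F ≤ c F := by
    intro F hF
    have : ({F} : Finset (Finset (Fin n))) ∈ covs F := by
      refine (hmemcovs _ _).mpr ⟨Finset.singleton_subset_iff.mpr hF, ?_⟩
      simp
    simpa using h_le F {F} this
  -- the optimal cover for univ
  obtain ⟨Astar, hAstar, hAeq⟩ := h_ex Finset.univ
  obtain ⟨hAs1, hAs2⟩ := (hmemcovs _ _).mp hAstar
  set M := h Finset.univ with hM
  -- M is an upper bound for all feasible set functions' value at univ
  have hub : ∀ (g : Finset (Fin n) → ℝ), g ∅ = 0 → (∀ ⦃S T : Finset (Fin n)⦄, S ⊆ T → g S ≤ g T) →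
      (∀ S T, g (S ∪ T) ≤ g S + g T) → (∀ F ∈ E, g F ≤ c F) → g Finset.univ ≤ M := by
    intro g h0 hmono hsub hedge
    calc g Finset.univ ≤ ∑ F ∈ Astar, g F :=
          subadd_cover_bound g h0 hmono hsub Astar Finset.univ hAs2
      _ ≤ ∑ F ∈ Astar, c F := Finset.sum_le_sum fun F hF => hedge F (hAs1 hF)
      _ = M := hAeq.symm
  -- sSup of the feasible-value set is M
  have hsup : sSup {x : ℝ | ∃ h : Finset (Fin n) → ℝ,
      h ∅ = 0 ∧ (∀ S, 0 ≤ h S) ∧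
      (∀ ⦃S T : Finset (Fin n)⦄, S ⊆ T → h S ≤ h T) ∧
      (∀ S T : Finset (Fin n), h (S ∪ T) ≤ h S + h T) ∧
      (∀ F ∈ E, h F ≤ c F) ∧ x = h Finset.univ} = M := by
    apply IsGreatest.csSup_eq
    constructor
    · exact ⟨h, h_empty, h_nonneg, h_mono, h_sub, h_edge, rfl⟩
    · rintro x ⟨g, h0, _, hmono, hsub, hedge, rfl⟩
      exact hub g h0 hmono hsub hedge
  rw [hsup]
  constructor
  · -- M is attained by the indicator cover of Astar
    refine ⟨fun F => if F ∈ Astar then 1 else 0, ?_, ?_⟩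
    · intro v
      obtain ⟨F, hF, hvF⟩ := Finset.mem_biUnion.mp (hAs2 (Finset.mem_univ v))
      have hFmem : F ∈ E.filter (fun F => v ∈ F) :=
        Finset.mem_filter.mpr ⟨hAs1 hF, hvF⟩
      have := Finset.single_le_sum (f := fun F => if F ∈ Astar then (1:ℕ) else 0)
        (fun _ _ => Nat.zero_le _) hFmem
      simpa [hF] using this
    · rw [hAeq]
      simp only [Nat.cast_ite, Nat.cast_one, Nat.cast_zero, ite_mul, one_mul, zero_mul]
      rw [Finset.sum_ite_mem, Finset.inter_eq_right.mpr hAs1]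
  · -- M is a lower bound over all integral edge covers
    rintro x ⟨lam, hcov, rfl⟩
    set A := E.filter (fun F => 1 ≤ lam F) with hAdef
    have hAcov : (Finset.univ : Finset (Fin n)) ⊆ A.biUnion id := by
      intro v _
      by_contra hv
      have hall : ∀ F ∈ E.filter (fun F => v ∈ F), lam F = 0 := by
        intro F hF
        obtain ⟨hFE, hvF⟩ := Finset.mem_filter.mp hF
        by_contra hlam
        have h1 : 1 ≤ lam F := Nat.one_le_iff_ne_zero.mpr hlam
        exact hv (Finset.mem_biUnion.mpr ⟨F, Finset.mem_filter.mpr ⟨hFE, h1⟩, hvF⟩)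
      have := hcov v
      rw [Finset.sum_eq_zero hall] at this
      omega
    have step1 : M ≤ ∑ F ∈ A, c F :=
      h_le _ _ ((hmemcovs _ _).mpr ⟨Finset.filter_subset _ _, hAcov⟩)
    have step2 : ∑ F ∈ A, c F ≤ ∑ F ∈ A, (lam F : ℝ) * c F := by
      apply Finset.sum_le_sum
      intro F hF
      obtain ⟨hFE, hlam⟩ := Finset.mem_filter.mp hF
      have := hc F hFE
      have h1 : (1:ℝ) ≤ (lam F : ℝ) := by exact_mod_cast hlam
      nlinarith
    have step3 : ∑ F ∈ A, (lam F : ℝ) * c F ≤ ∑ F ∈ E, (lam F : ℝ) * c F := by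
      apply Finset.sum_le_sum_of_subset_of_nonneg (Finset.filter_subset _ _)
      intro F hFE _
      exact mul_nonneg (Nat.cast_nonneg _) (hc F hFE)
    linarith
end

section
/- Let H = ([n], E) be a hypergraph in which every vertex belongs to at least one edge, and let c : E → ℝ with c_F ≥ 0 for all F ∈ E. Then the following three quantities are equal: (a) the supremum of h([n]) over all nonnegative, monotone, modular set functions h on [n] with h(∅) = 0 satisfying h(F) ≤ c_F for every F ∈ E; (b) the supremum of h([n]) over all nonnegative, monotone, submodular set functions h on [n] with h(∅) = 0 satisfying h(F) ≤ c_F for every F ∈ E; (c) the infimum of Σ_{F∈E} λ_F·c_F over all fractional edge covers λ of H. -/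
/-!
Every modular function is submodular. Conversely, for a monotone submodular `h` with
`h ∅ = 0`, the greedy construction of Edmonds (adding the vertices one at a time and giving each
its marginal value) produces nonnegative vertex weights whose modular function lies below `h`
and agrees with `h` on the whole ground set. Hence the modular and the submodular bounds both
equal the fractional vertex packing number, which is the linear-programming dual of the
fractional edge cover number. Strong duality comes from Farkas' lemma in the form of
hyperplane separation from the closure of a cone: it yields covers that are feasible and
optimal up to any `ε`, and the slack is absorbed by enlarging the right-hand side.
-/

open Finset Matrix

theorem exists_nonneg_sum_le_of_submodular {α : Type*} [DecidableEq α] {h : Finset α → ℝ}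
    (h0 : h ∅ = 0) (hmono : Monotone h)
    (hsub : ∀ S T, h (S ∪ T) + h (S ∩ T) ≤ h S + h T) (U : Finset α) :
    ∃ w : α → ℝ, (∀ v, 0 ≤ w v) ∧ (∀ S ⊆ U, ∑ v ∈ S, w v ≤ h S) ∧ ∑ v ∈ U, w v = h U := by
  induction U using Finset.induction_on with
  | empty => exact ⟨0, fun _ => le_rfl, fun S hS => by simp [subset_empty.1 hS, h0], by simp [h0]⟩
  | insert a U ha ih =>
    obtain ⟨w, hw0, hwle, hwU⟩ := ih
    refine ⟨Function.update w a (h (insert a U) - h U), fun v => ?_, fun S hS => ?_, ?_⟩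
    · rcases eq_or_ne v a with rfl | hv
      · simpa using hmono (subset_insert v U)
      · simpa [hv] using hw0 v
    · by_cases haS : a ∈ S
      · have hunion : S ∪ U = insert a U := by grind
        have hinter : S ∩ U = S.erase a := by grind
        have hsubmod := hsub S U
        have hrest := hwle (S.erase a) (subset_insert_iff.1 hS)
        rw [hunion, hinter] at hsubmod
        rw [← add_sum_erase S _ haS, Function.update_self,
          sum_update_of_notMem (notMem_erase a S)]
        linarith
      · rw [sum_update_of_notMem haS]
        exact hwle S ((subset_insert_iff_of_notMem haS).1 hS)
    · rw [sum_insert ha, Function.update_self, sum_update_of_notMem ha, hwU]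
      ring

theorem LinearMap.apply_prod_eq_dotProduct_add {m : Type*} [Fintype m] [DecidableEq m]
    (f : (m → ℝ) × ℝ →ₗ[ℝ] ℝ) (z : m → ℝ) (r : ℝ) :
    f (z, r) = z ⬝ᵥ (fun v => f (Pi.single v 1, 0)) + r * f (0, 1) := by
  have hz := LinearMap.pi_apply_eq_sum_univ (f ∘ₗ LinearMap.inl ℝ _ _) z
  have hr : f (0, r) = r * f (0, 1) := by
    rw [← smul_eq_mul, ← map_smul, Prod.smul_mk, smul_zero, smul_eq_mul, mul_one]
  simp only [LinearMap.coe_comp, Function.comp_apply, LinearMap.inl_apply, smul_eq_mul,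
    ← Pi.single_apply, Pi.single_comm] at hz
  rw [show (z, r) = (z, 0) + (0, r) by simp, map_add, hz, hr, dotProduct]

namespace Matrix

variable {m ι : Type*} [Fintype m] {A : Matrix m ι ℝ} {b : m → ℝ} {c : ι → ℝ} {p : ℝ}

theorem dotProduct_le_mul_of_vecMul_le_smul
    (hfeas : ∃ w₀, 0 ≤ w₀ ∧ w₀ ᵥ* A ≤ c) (hbdd : ∀ w, 0 ≤ w → w ᵥ* A ≤ c → w ⬝ᵥ b ≤ p)
    {u : m → ℝ} {τ : ℝ} (hu : 0 ≤ u) (hτ : 0 ≤ τ) (huA : u ᵥ* A ≤ τ • c) :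
    u ⬝ᵥ b ≤ τ * p := by
  -- `(w₀ + t • u) / (1 + t τ)` is feasible for every `t ≥ 0`; let `t → ∞`.
  obtain ⟨w₀, hw₀, hw₀A⟩ := hfeas
  have hw₀b := hbdd w₀ hw₀ hw₀A
  have hray : ∀ t : ℝ, 0 ≤ t → w₀ ⬝ᵥ b + t * (u ⬝ᵥ b) ≤ (1 + t * τ) * p := by
    intro t ht
    have hs : 0 < 1 + t * τ := by positivity
    have h := hbdd ((1 + t * τ)⁻¹ • (w₀ + t • u))
      (smul_nonneg (inv_nonneg.2 hs.le) (add_nonneg hw₀ (smul_nonneg ht hu))) (fun j => by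
        have h1 := hw₀A j
        have h2 := huA j
        simp only [smul_vecMul, add_vecMul, Pi.smul_apply, Pi.add_apply, smul_eq_mul] at h1 h2 ⊢
        rw [inv_mul_le_iff₀ hs]
        nlinarith)
    rw [smul_dotProduct, add_dotProduct, smul_dotProduct, smul_eq_mul, smul_eq_mul,
      inv_mul_le_iff₀ hs] at h
    exact h
  by_contra! hlt
  have hpos : 0 < u ⬝ᵥ b - τ * p := sub_pos.2 hlt
  set t := (p - w₀ ⬝ᵥ b + 1) / (u ⬝ᵥ b - τ * p)
  have ht : t * (u ⬝ᵥ b - τ * p) = p - w₀ ⬝ᵥ b + 1 := div_mul_cancel₀ _ hpos.ne'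
  have := hray t (div_nonneg (by linarith) hpos.le)
  linarith

variable [Fintype ι]

/-- `(b, p)` lies in the image of the nonnegative orthant under `slackMap A c` iff some `x ≥ 0`
satisfies `A *ᵥ x ≥ b` and `c ⬝ᵥ x ≤ p`; the other two components are slack variables. -/
noncomputable def slackMap (A : Matrix m ι ℝ) (c : ι → ℝ) :
    (ι → ℝ) × (m → ℝ) × ℝ →L[ℝ] (m → ℝ) × ℝ :=
  LinearMap.toContinuousLinearMap
    { toFun := fun z => (A *ᵥ z.1 - z.2.1, c ⬝ᵥ z.1 + z.2.2)
      map_add' := fun z z' => by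
        simp only [Prod.fst_add, Prod.snd_add, mulVec_add, dotProduct_add, Prod.mk_add_mk]
        congr 1 <;> abel
      map_smul' := fun a z => by
        simp [mulVec_smul, dotProduct_smul, smul_sub, mul_add] }

@[simp]
theorem slackMap_apply (A : Matrix m ι ℝ) (c : ι → ℝ) (z : (ι → ℝ) × (m → ℝ) × ℝ) :
    slackMap A c z = (A *ᵥ z.1 - z.2.1, c ⬝ᵥ z.1 + z.2.2) := rfl

theorem mem_map_slackMap
    (hfeas : ∃ w₀, 0 ≤ w₀ ∧ w₀ ᵥ* A ≤ c) (hbdd : ∀ w, 0 ≤ w → w ᵥ* A ≤ c → w ⬝ᵥ b ≤ p) :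
    (b, p) ∈ (ProperCone.positive ℝ _).map (slackMap A c) := by
  classical
  by_contra hnot
  obtain ⟨f, hf, hfb⟩ := ProperCone.hyperplane_separation_point _ hnot
  have hfL : ∀ z, 0 ≤ z → 0 ≤ f (slackMap A c z) := fun z hz =>
    hf _ (subset_closure ⟨z, hz, rfl⟩)
  set y : m → ℝ := fun v => f (Pi.single v 1, 0)
  set τ := f (0, 1)
  have hf_apply : ∀ z r, f (z, r) = z ⬝ᵥ y + r * τ :=
    LinearMap.apply_prod_eq_dotProduct_add (f : (m → ℝ) × ℝ →ₗ[ℝ] ℝ)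
  have hτ : 0 ≤ τ := by simpa [hf_apply] using hfL (0, 0, 1) (by simp [Prod.le_def])
  have hy : 0 ≤ -y := fun v => by
    simpa [hf_apply] using hfL (0, Pi.single v 1, 0) (by simp [Prod.le_def, Pi.single_nonneg])
  have hyA : -y ᵥ* A ≤ τ • c := fun j => by
    have := hfL (Pi.single j 1, 0, 0) (by simp [Prod.le_def, Pi.single_nonneg])
    simp only [slackMap_apply, mulVec_single_one, dotProduct_single_one, sub_zero, add_zero,
      hf_apply, dotProduct_comm _ y] at this
    change 0 ≤ (y ᵥ* A) j + c j * τ at this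
    simp only [neg_vecMul, Pi.neg_apply, Pi.smul_apply, smul_eq_mul]
    linarith
  have := dotProduct_le_mul_of_vecMul_le_smul hfeas hbdd hy hτ hyA
  rw [hf_apply] at hfb
  rw [neg_dotProduct, dotProduct_comm] at this
  linarith

theorem exists_nonneg_mulVec_gt_sub_dotProduct_lt_add
    (hfeas : ∃ w₀, 0 ≤ w₀ ∧ w₀ ᵥ* A ≤ c) (hbdd : ∀ w, 0 ≤ w → w ᵥ* A ≤ c → w ⬝ᵥ b ≤ p)
    {ε : ℝ} (hε : 0 < ε) :
    ∃ x, 0 ≤ x ∧ (∀ v, b v - ε < (A *ᵥ x) v) ∧ c ⬝ᵥ x < p + ε := by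
  have hmem := mem_map_slackMap hfeas hbdd
  rw [ProperCone.mem_map, PointedCone.mem_closure, Metric.mem_closure_iff] at hmem
  obtain ⟨_, ⟨⟨x, s, t⟩, hz, rfl⟩, hdist⟩ := hmem ε hε
  obtain ⟨hx, hs, ht⟩ : 0 ≤ x ∧ 0 ≤ s ∧ 0 ≤ t := by simpa [Prod.le_def] using hz
  rw [Prod.dist_eq, max_lt_iff, dist_pi_lt_iff hε] at hdist
  refine ⟨x, hx, fun v => ?_, ?_⟩
  · have hv : |b v - ((A *ᵥ x) v - s v)| < ε := hdist.1 v
    have hsv : 0 ≤ s v := hs v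
    linarith only [(abs_lt.1 hv).2, hsv]
  · have hp : |p - (c ⬝ᵥ x + t)| < ε := hdist.2
    linarith [(abs_lt.1 hp).1]

end Matrix

section Hypergraph

variable {α : Type*} [Fintype α] (E : Finset (Finset α)) (c : Finset α → ℝ)

def modularBoundValues : Set ℝ :=
  {x : ℝ | ∃ h : Finset α → ℝ,
    h ∅ = 0 ∧ (∀ S, 0 ≤ h S) ∧
    (∀ ⦃S T : Finset α⦄, S ⊆ T → h S ≤ h T) ∧
    (∀ S : Finset α, h S = ∑ v ∈ S, h {v}) ∧
    (∀ F ∈ E, h F ≤ c F) ∧ x = h Finset.univ}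

def vertexPackingValues : Set ℝ :=
  {x : ℝ | ∃ w : α → ℝ, (∀ v, 0 ≤ w v) ∧ (∀ F ∈ E, ∑ v ∈ F, w v ≤ c F) ∧ x = ∑ v, w v}

theorem modularBoundValues_eq_vertexPackingValues :
    modularBoundValues E c = vertexPackingValues E c := by
  ext x
  constructor
  · rintro ⟨h, -, hnonneg, -, hmod, hE, rfl⟩
    exact ⟨fun v => h {v}, fun v => hnonneg _, fun F hF => hmod F ▸ hE F hF, hmod univ⟩
  · rintro ⟨w, hw, hwE, rfl⟩
    exact ⟨fun S => ∑ v ∈ S, w v, sum_empty, fun S => sum_nonneg fun v _ => hw v,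
      fun S T hST => sum_le_sum_of_subset_of_nonneg hST fun v _ _ => hw v, fun S => by simp,
      hwE, rfl⟩

variable [DecidableEq α]

def submodularBoundValues : Set ℝ :=
  {x : ℝ | ∃ h : Finset α → ℝ,
    h ∅ = 0 ∧ (∀ S, 0 ≤ h S) ∧
    (∀ ⦃S T : Finset α⦄, S ⊆ T → h S ≤ h T) ∧
    (∀ S T : Finset α, h (S ∪ T) + h (S ∩ T) ≤ h S + h T) ∧
    (∀ F ∈ E, h F ≤ c F) ∧ x = h Finset.univ}

def fractionalCoverCosts : Set ℝ :=
  {x : ℝ | ∃ lam : Finset α → ℝ,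
    (∀ F : Finset α, 0 ≤ lam F) ∧
    (∀ v : α, 1 ≤ ∑ F ∈ E.filter (fun F => v ∈ F), lam F) ∧
    x = ∑ F ∈ E, lam F * c F}

theorem modularBoundValues_subset_submodularBoundValues :
    modularBoundValues E c ⊆ submodularBoundValues E c := by
  rintro x ⟨h, h0, hnonneg, hmono, hmod, hE, rfl⟩
  refine ⟨h, h0, hnonneg, hmono, fun S T => ?_, hE, rfl⟩
  rw [hmod (S ∪ T), hmod (S ∩ T), hmod S, hmod T, sum_union_inter]

theorem submodularBoundValues_subset_vertexPackingValues :
    submodularBoundValues E c ⊆ vertexPackingValues E c := by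
  rintro x ⟨h, h0, -, hmono, hsub, hE, rfl⟩
  obtain ⟨w, hw, hwle, hwuniv⟩ := exists_nonneg_sum_le_of_submodular h0 hmono hsub univ
  exact ⟨w, hw, fun F hF => (hwle F (subset_univ F)).trans (hE F hF), hwuniv.symm⟩

theorem sum_le_sum_mul_of_fractionalCover {w : α → ℝ} (hwE : ∀ F ∈ E, ∑ v ∈ F, w v ≤ c F)
    (hw : ∀ v, 0 ≤ w v) {lam : Finset α → ℝ} (hlam : ∀ F, 0 ≤ lam F)
    (hcov : ∀ v, 1 ≤ ∑ F ∈ E.filter (fun F => v ∈ F), lam F) :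
    ∑ v, w v ≤ ∑ F ∈ E, lam F * c F :=
  calc ∑ v, w v ≤ ∑ v, (∑ F ∈ E.filter (fun F => v ∈ F), lam F) * w v :=
        sum_le_sum fun v _ => le_mul_of_one_le_left (hw v) (hcov v)
    _ = ∑ F ∈ E, lam F * ∑ v ∈ F, w v := by
        simp only [sum_filter, sum_mul, ite_mul, zero_mul, mul_sum]
        rw [sum_comm]
        simp [sum_ite_mem]
    _ ≤ ∑ F ∈ E, lam F * c F :=
        sum_le_sum fun F hF => mul_le_mul_of_nonneg_left (hwE F hF) (hlam F)

def incidence : Matrix α (Finset α) ℝ := Matrix.of fun v F => if F ∈ E ∧ v ∈ F then 1 else 0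

theorem incidence_mulVec (x : Finset α → ℝ) (v : α) :
    (incidence E *ᵥ x) v = ∑ F ∈ E.filter (fun F => v ∈ F), x F := by
  simp [incidence, mulVec, dotProduct, Finset.sum_filter, ite_and]

theorem vecMul_incidence (w : α → ℝ) (F : Finset α) :
    (w ᵥ* incidence E) F = if F ∈ E then ∑ v ∈ F, w v else 0 := by
  simp [incidence, vecMul, dotProduct, ite_and, Finset.sum_ite_mem]

theorem exists_fractionalCover_cost_lt (hc : ∀ F ∈ E, 0 ≤ c F) {p : ℝ}
    (hp : ∀ w : α → ℝ, (∀ v, 0 ≤ w v) → (∀ F ∈ E, ∑ v ∈ F, w v ≤ c F) → ∑ v, w v ≤ p)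
    {δ : ℝ} (hδ : 0 < δ) :
    ∃ lam : Finset α → ℝ, (∀ F, 0 ≤ lam F) ∧
      (∀ v, 1 ≤ ∑ F ∈ E.filter (fun F => v ∈ F), lam F) ∧ ∑ F ∈ E, lam F * c F < p + δ := by
  -- Non-edges are zero columns of `incidence E`, given cost `0`.
  set c' : Finset α → ℝ := fun F => if F ∈ E then c F else 0
  have hpacking : ∀ w : α → ℝ, w ᵥ* incidence E ≤ c' ↔ ∀ F ∈ E, ∑ v ∈ F, w v ≤ c F := by
    intro w
    refine ⟨fun h F hF => by simpa [vecMul_incidence, c', hF] using h F, fun h F => ?_⟩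
    by_cases hF : F ∈ E <;> simp [vecMul_incidence, c', hF, h]
  have hp0 : 0 ≤ p := by simpa using hp 0 (fun _ => le_rfl) (by simpa using hc)
  set ε := δ / (p + 1)
  have hε : 0 < ε := by positivity
  -- The right-hand side `1 + ε` absorbs the `ε`-slack, so the cover comes out exact.
  obtain ⟨x, hx, hcov, hcost⟩ := exists_nonneg_mulVec_gt_sub_dotProduct_lt_add
    (b := fun _ => 1 + ε) (p := (1 + ε) * p) ⟨0, le_rfl, (hpacking 0).2 (by simpa using hc)⟩
    (fun w hw hwA => by
      rw [dotProduct, ← Finset.sum_mul, mul_comm]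
      exact mul_le_mul_of_nonneg_left (hp w hw ((hpacking w).1 hwA)) (by positivity))
    hε
  refine ⟨x, hx, fun v => ?_, ?_⟩
  · linarith [hcov v, incidence_mulVec E x v]
  · have hcost' : c' ⬝ᵥ x = ∑ F ∈ E, x F * c F := by
      simp [c', dotProduct, Finset.sum_ite_mem, mul_comm]
    have hδε : ε * (p + 1) = δ := div_mul_cancel₀ _ (by positivity)
    linarith

theorem csSup_vertexPackingValues_eq_csInf_fractionalCoverCosts
    (hEcov : ∀ v : α, ∃ F ∈ E, v ∈ F) (hc : ∀ F ∈ E, 0 ≤ c F) :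
    sSup (vertexPackingValues E c) = sInf (fractionalCoverCosts E c) := by
  have hweak : ∀ x ∈ vertexPackingValues E c, ∀ y ∈ fractionalCoverCosts E c, x ≤ y := by
    rintro _ ⟨w, hw, hwE, rfl⟩ _ ⟨lam, hlam, hcov, rfl⟩
    exact sum_le_sum_mul_of_fractionalCover E c hwE hw hlam hcov
  have hzero : (0 : ℝ) ∈ vertexPackingValues E c :=
    ⟨0, fun _ => le_rfl, fun F hF => by simpa using hc F hF, by simp⟩
  have hones : ∑ F ∈ E, 1 * c F ∈ fractionalCoverCosts E c := by
    refine ⟨fun _ => 1, fun _ => zero_le_one, fun v => ?_, rfl⟩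
    obtain ⟨F, hF, hvF⟩ := hEcov v
    exact single_le_sum (fun _ _ => zero_le_one) (mem_filter.2 ⟨hF, hvF⟩)
  refine le_antisymm (csSup_le ⟨0, hzero⟩ fun x hx => le_csInf ⟨_, hones⟩ (hweak x hx)) ?_
  refine le_of_forall_pos_lt_add fun δ hδ => ?_
  obtain ⟨lam, hlam, hcov, hcost⟩ := exists_fractionalCover_cost_lt E c hc
    (fun w hw hwE => le_csSup ⟨_, fun x hx => hweak x hx _ hones⟩ ⟨w, hw, hwE, rfl⟩) hδ
  exact (csInf_le ⟨0, hweak 0 hzero⟩ ⟨lam, hlam, hcov, rfl⟩).trans_lt hcost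

end Hypergraph

theorem agm_bound_collapse_general {n : ℕ}
    (E : Finset (Finset (Fin n)))
    (hEcov : ∀ v : Fin n, ∃ F ∈ E, v ∈ F)
    (c : Finset (Fin n) → ℝ) (hc : ∀ F ∈ E, 0 ≤ c F) :
    sSup {x : ℝ | ∃ h : Finset (Fin n) → ℝ,
        h ∅ = 0 ∧ (∀ S, 0 ≤ h S) ∧
        (∀ ⦃S T : Finset (Fin n)⦄, S ⊆ T → h S ≤ h T) ∧
        (∀ S : Finset (Fin n), h S = ∑ v ∈ S, h {v}) ∧
        (∀ F ∈ E, h F ≤ c F) ∧ x = h Finset.univ}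
      = sSup {x : ℝ | ∃ h : Finset (Fin n) → ℝ,
        h ∅ = 0 ∧ (∀ S, 0 ≤ h S) ∧
        (∀ ⦃S T : Finset (Fin n)⦄, S ⊆ T → h S ≤ h T) ∧
        (∀ S T : Finset (Fin n), h (S ∪ T) + h (S ∩ T) ≤ h S + h T) ∧
        (∀ F ∈ E, h F ≤ c F) ∧ x = h Finset.univ} ∧
    sSup {x : ℝ | ∃ h : Finset (Fin n) → ℝ,
        h ∅ = 0 ∧ (∀ S, 0 ≤ h S) ∧
        (∀ ⦃S T : Finset (Fin n)⦄, S ⊆ T → h S ≤ h T) ∧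
        (∀ S T : Finset (Fin n), h (S ∪ T) + h (S ∩ T) ≤ h S + h T) ∧
        (∀ F ∈ E, h F ≤ c F) ∧ x = h Finset.univ}
      = sInf {x : ℝ | ∃ lam : Finset (Fin n) → ℝ,
        (∀ F : Finset (Fin n), 0 ≤ lam F) ∧
        (∀ v : Fin n, 1 ≤ ∑ F ∈ E.filter (fun F => v ∈ F), lam F) ∧
        x = ∑ F ∈ E, lam F * c F} := by
  have hmod := modularBoundValues_eq_vertexPackingValues E c
  have hsub : submodularBoundValues E c = vertexPackingValues E c :=
    (submodularBoundValues_subset_vertexPackingValues E c).antisymm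
      (hmod ▸ modularBoundValues_subset_submodularBoundValues E c)
  exact ⟨congrArg sSup (hmod.trans hsub.symm),
    (congrArg sSup hsub).trans
      (csSup_vertexPackingValues_eq_csInf_fractionalCoverCosts E c hEcov hc)⟩

/-- **AGM / fractional edge cover bound.**
For a hypergraph `([n], E)` in which every vertex is covered by some edge and
nonnegative edge weights `c`, the following three quantities coincide:
(a) the supremum of `h [n]` over constrained nonnegative monotone *modular*
set functions, (b) the same supremum over constrained nonnegative monotone
*submodular* set functions, and (c) the infimum of `∑_{F∈E} λ_F · c_F` over
all fractional edge covers `λ`. -/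
theorem agm_bound_collapse {n : ℕ} (hn : 0 < n)
    (E : Finset (Finset (Fin n)))
    (hE : ∀ F ∈ E, F.Nonempty)
    (hEcov : ∀ v : Fin n, ∃ F ∈ E, v ∈ F)
    (c : Finset (Fin n) → ℝ) (hc : ∀ F ∈ E, 0 ≤ c F) :
    sSup {x : ℝ | ∃ h : Finset (Fin n) → ℝ,
        h ∅ = 0 ∧ (∀ S, 0 ≤ h S) ∧
        (∀ ⦃S T : Finset (Fin n)⦄, S ⊆ T → h S ≤ h T) ∧
        (∀ S : Finset (Fin n), h S = ∑ v ∈ S, h {v}) ∧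
        (∀ F ∈ E, h F ≤ c F) ∧ x = h Finset.univ}
      = sSup {x : ℝ | ∃ h : Finset (Fin n) → ℝ,
        h ∅ = 0 ∧ (∀ S, 0 ≤ h S) ∧
        (∀ ⦃S T : Finset (Fin n)⦄, S ⊆ T → h S ≤ h T) ∧
        (∀ S T : Finset (Fin n), h (S ∪ T) + h (S ∩ T) ≤ h S + h T) ∧
        (∀ F ∈ E, h F ≤ c F) ∧ x = h Finset.univ} ∧
    sSup {x : ℝ | ∃ h : Finset (Fin n) → ℝ,
        h ∅ = 0 ∧ (∀ S, 0 ≤ h S) ∧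
        (∀ ⦃S T : Finset (Fin n)⦄, S ⊆ T → h S ≤ h T) ∧
        (∀ S T : Finset (Fin n), h (S ∪ T) + h (S ∩ T) ≤ h S + h T) ∧
        (∀ F ∈ E, h F ≤ c F) ∧ x = h Finset.univ}
      = sInf {x : ℝ | ∃ lam : Finset (Fin n) → ℝ,
        (∀ F : Finset (Fin n), 0 ≤ lam F) ∧
        (∀ v : Fin n, 1 ≤ ∑ F ∈ E.filter (fun F => v ∈ F), lam F) ∧
        x = ∑ F ∈ E, lam F * c F} :=
  agm_bound_collapse_general E hEcov c hc
end

section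
/- Let A, B, X, Y, C be finitely-valued random variables on a common probability space and let t ≥ 0 be a real number. Suppose that H[X,Y] ≤ 3t, H[A,X] ≤ 3t, H[A,Y] ≤ 3t, H[B,X] ≤ 3t, H[B,Y] ≤ 3t, and H[C] ≤ 2t, and that each of the six conditional entropies H[A,B,X,Y,C | A,B], H[A,B,X,Y,C | A,X,Y], H[A,B,X,Y,C | B,X,Y], H[A,B,X,Y,C | A,C], H[A,B,X,Y,C | X,C], H[A,B,X,Y,C | Y,C] is zero. Then H[A,B,X,Y,C] ≤ (43/11)·t. -/
/-- Shannon entropy (base 2) of the random variable `f` on a finite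
probability space with mass function `p`. -/
noncomputable def entropy {Ω α : Type*} [Fintype Ω] (p : Ω → ℝ) (f : Ω → α) : ℝ :=
  letI := Classical.decEq α
  ∑ y ∈ Finset.univ.image f,
    -((∑ ω ∈ Finset.univ.filter (fun ω => f ω = y), p ω) *
        Real.logb 2 (∑ ω ∈ Finset.univ.filter (fun ω => f ω = y), p ω))

/-- Conditional entropy `H[f | g] := H[f, g] − H[g]`. -/
noncomputable def condEntropy {Ω α β : Type*} [Fintype Ω]
    (p : Ω → ℝ) (f : Ω → α) (g : Ω → β) : ℝ :=
  entropy p (fun ω => (f ω, g ω)) - entropy p g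

/-
The core is the Zhang–Yeung inequality
`2 I[C : D] ≤ 3 I[C : D | A] + I[C : D | B] + I[A : B] + I[A : (C, D)]`.
Take a copy `A'` of `A` over `(C, D)`: `(A', C, D)` has the law of `(A, C, D)` and `A'` is
independent of `(A, B)` given `(C, D)`. For any five variables, eleven submodularity instances
add up to `2 I[C : D] ≤ I[C : D | A] + I[C : D | B] + I[A : B] + 2 I[C : D | A'] + I[A' : (C, D)]
+ 3 I[(A, B) : A' | (C, D)]`; for the copy the last term vanishes and the `A'`-terms equal the
`A`-terms. Submodularity itself is Gibbs' inequality against the law that makes the two variables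
independent given the third.

Apply the inequality to `(A, B, X, Y)` and `(B, A, X, Y)`. The vanishing conditional entropies
make `H[A,B]`, `H[A,X,Y]`, `H[B,X,Y]`, `H[X,C]`, `H[Y,C]` all equal to `h := H[A,B,X,Y,C]`, so
with subadditivity the sum of the two inequalities reads `21 h ≤ 82 t`, and `82/21 < 43/11`.
-/

open Finset Real

noncomputable def law {Ω α : Type*} [Fintype Ω] (p : Ω → ℝ) (f : Ω → α) (y : α) : ℝ :=
  letI := Classical.decEq α
  ∑ ω, if f ω = y then p ω else 0

section Law

variable {Ω α β : Type*} [Fintype Ω] {p : Ω → ℝ}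

lemma law_apply [DecidableEq α] (p : Ω → ℝ) (f : Ω → α) (y : α) :
    law p f y = ∑ ω, if f ω = y then p ω else 0 := by
  unfold law
  congr!

lemma law_nonneg (hp : ∀ ω, 0 ≤ p ω) (f : Ω → α) (y : α) : 0 ≤ law p f y := by
  classical
  rw [law_apply]
  exact sum_nonneg fun ω _ => by split_ifs <;> simp [hp ω]

lemma law_le_law (hp : ∀ ω, 0 ≤ p ω) {f : Ω → α} {g : Ω → β} {y : α} {z : β}
    (h : ∀ ω, f ω = y → g ω = z) : law p f y ≤ law p g z := by
  classical
  rw [law_apply, law_apply]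
  refine sum_le_sum fun ω _ => ?_
  split_ifs with hf hg <;> simp_all

lemma le_law (hp : ∀ ω, 0 ≤ p ω) (f : Ω → α) (ω : Ω) : p ω ≤ law p f (f ω) := by
  classical
  rw [law_apply]
  exact (if_pos rfl).symm.le.trans
    (single_le_sum (f := fun ω' => if f ω' = f ω then p ω' else 0)
      (fun ω' _ => by split_ifs <;> simp [hp ω']) (mem_univ ω))

lemma law_comp_pos (hp : ∀ ω, 0 ≤ p ω) (f : Ω → α) (φ : α → β) {y : α} (hy : 0 < law p f y) :
    0 < law p (fun ω => φ (f ω)) (φ y) :=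
  hy.trans_le (law_le_law hp fun ω hω => by rw [hω])

lemma law_eq_zero_of_comp (hp : ∀ ω, 0 ≤ p ω) (f : Ω → α) (φ : α → β) {y : α}
    (h : law p (fun ω => φ (f ω)) (φ y) = 0) : law p f y = 0 :=
  (law_nonneg hp f y).eq_or_lt.elim Eq.symm fun hy => absurd h (law_comp_pos hp f φ hy).ne'

lemma sum_law_mul [Fintype α] (p : Ω → ℝ) (f : Ω → α) (F : α → ℝ) :
    ∑ y, law p f y * F y = ∑ ω, p ω * F (f ω) := by
  classical
  simp only [law_apply, sum_mul, ite_mul, zero_mul]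
  rw [sum_comm]
  simp [sum_ite_eq]

lemma sum_law [Fintype α] (p : Ω → ℝ) (f : Ω → α) : ∑ y, law p f y = ∑ ω, p ω := by
  simpa using sum_law_mul p f 1

lemma sum_law_pair [Fintype β] (p : Ω → ℝ) (f : Ω → α) (g : Ω → β) (y : α) :
    ∑ z, law p (fun ω => (f ω, g ω)) (y, z) = law p f y := by
  classical
  simp only [law_apply, Prod.mk.injEq, ite_and]
  rw [sum_comm]
  simp [sum_ite_eq]

lemma law_comp [Fintype α] (p : Ω → ℝ) (f : Ω → α) (φ : α → β) :
    law p (fun ω => φ (f ω)) = law (law p f) φ := by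
  classical
  ext z
  have := sum_law_mul p f fun y => if φ y = z then 1 else 0
  simp only [mul_ite, mul_one, mul_zero] at this
  rw [law_apply, law_apply, ← this]

lemma law_congr_ae {f g : Ω → α} (h : ∀ ω, p ω ≠ 0 → f ω = g ω) : law p f = law p g := by
  classical
  ext y
  rw [law_apply, law_apply]
  refine sum_congr rfl fun ω _ => ?_
  by_cases hω : p ω = 0
  · simp [hω]
  · rw [h ω hω]

end Law

section Entropy

variable {Ω Ω' α β γ : Type*} [Fintype Ω] [Fintype Ω'] {p : Ω → ℝ}

lemma entropy_eq_sum_law [Fintype α] (p : Ω → ℝ) (f : Ω → α) :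
    entropy p f = -∑ y, law p f y * logb 2 (law p f y) := by
  classical
  have hlaw : ∀ y, ∑ ω ∈ univ.filter (fun ω => f ω = y), p ω = law p f y := fun y => by
    rw [law_apply, sum_filter]
  rw [← sum_neg_distrib, entropy]
  simp only [hlaw]
  refine sum_subset (subset_univ _) fun y _ hy => ?_
  have : law p f y = 0 := by
    rw [law_apply]
    exact sum_eq_zero fun ω _ =>
      if_neg fun h : f ω = y => hy (h ▸ mem_image_of_mem f (mem_univ ω))
  simp [this]

lemma entropy_eq_sum [Fintype α] (p : Ω → ℝ) (f : Ω → α) :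
    entropy p f = -∑ ω, p ω * logb 2 (law p f (f ω)) := by
  rw [entropy_eq_sum_law, sum_law_mul p f fun y => logb 2 (law p f y)]

lemma entropy_comp_eq_sum [Fintype α] [Fintype β] (p : Ω → ℝ) (g : Ω → α) (φ : α → β) :
    entropy p (fun ω => φ (g ω)) = -∑ x, law p g x * logb 2 (law p (fun ω => φ (g ω)) (φ x)) := by
  rw [entropy_eq_sum, sum_law_mul p g fun x => logb 2 (law p (fun ω => φ (g ω)) (φ x))]

lemma entropy_eq_of_law_eq [Fintype α] {q : Ω' → ℝ} {f : Ω → α} {g : Ω' → α}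
    (h : law q g = law p f) : entropy q g = entropy p f := by
  rw [entropy_eq_sum_law, entropy_eq_sum_law, h]

lemma entropy_comp_eq_of_law_eq [Fintype α] [Fintype β] {q : Ω' → ℝ} {f : Ω → α} {g : Ω' → α}
    (h : law q g = law p f) (φ : α → β) :
    entropy q (fun z => φ (g z)) = entropy p (fun ω => φ (f ω)) :=
  entropy_eq_of_law_eq (by rw [law_comp q g φ, law_comp p f φ, h])

lemma entropy_congr [Fintype α] [Fintype β] {f : Ω → α} {g : Ω → β}
    (h : ∀ ω ω', f ω' = f ω ↔ g ω' = g ω) : entropy p f = entropy p g := by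
  classical
  simp only [entropy_eq_sum, law_apply, h]

lemma entropy_unit (hp1 : ∑ ω, p ω = 1) : entropy p (fun _ => ()) = 0 := by
  have h1 : law p (fun _ => ()) () = 1 := by simpa [hp1] using sum_law p (fun _ => ())
  simp [entropy_eq_sum_law, h1]

lemma entropy_eq_of_condEntropy_eq_zero [Fintype α] [Fintype β] (f : Ω → α) (φ : α → β)
    (h : condEntropy p f (fun ω => φ (f ω)) = 0) : entropy p f = entropy p (fun ω => φ (f ω)) := by
  have : entropy p (fun ω => (f ω, φ (f ω))) = entropy p f :=
    entropy_congr fun _ _ => by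
      simp only [Prod.mk.injEq]
      exact ⟨And.left, fun h => ⟨h, congrArg φ h⟩⟩
  rw [condEntropy, this] at h
  linarith

end Entropy

lemma sum_mul_log_div_nonneg {ι : Type*} [Fintype ι] {P Q : ι → ℝ} (hP : ∀ i, 0 ≤ P i)
    (hQ : ∀ i, 0 ≤ Q i) (hPQ : ∀ i, P i ≠ 0 → Q i ≠ 0) (hsum : ∑ i, Q i ≤ ∑ i, P i) :
    0 ≤ ∑ i, P i * log (P i / Q i) := by
  have key : ∀ i, P i - Q i ≤ P i * log (P i / Q i) := fun i => by
    rcases (hP i).eq_or_lt with h0 | hPi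
    · simp [← h0, hQ i]
    have hQi : 0 < Q i := (hQ i).lt_of_ne (hPQ i hPi.ne').symm
    have := mul_le_mul_of_nonneg_left (log_le_sub_one_of_pos (div_pos hQi hPi)) hPi.le
    rw [mul_sub, mul_div_cancel₀ _ hPi.ne', mul_one] at this
    rw [← inv_div, log_inv]
    linarith
  calc 0 ≤ ∑ i, (P i - Q i) := by rw [sum_sub_distrib]; linarith
    _ ≤ _ := sum_le_sum fun i _ => key i

section Information

variable {Ω Ω' α β γ : Type*} [Fintype Ω] [Fintype Ω'] {p : Ω → ℝ}

noncomputable def mutualInfo (p : Ω → ℝ) (f : Ω → α) (g : Ω → β) : ℝ :=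
  entropy p f + entropy p g - entropy p (fun ω => (f ω, g ω))

noncomputable def condMutualInfo (p : Ω → ℝ) (f : Ω → α) (g : Ω → β) (h : Ω → γ) : ℝ :=
  entropy p (fun ω => (h ω, f ω)) + entropy p (fun ω => (h ω, g ω))
    - entropy p (fun ω => (h ω, f ω, g ω)) - entropy p h

variable [Fintype α] [Fintype β] [Fintype γ]

lemma condMutualInfo_eq_sum (hp : ∀ ω, 0 ≤ p ω) (f : Ω → α) (g : Ω → β) (h : Ω → γ) :
    condMutualInfo p f g h = ∑ x, law p (fun ω => (h ω, f ω, g ω)) x *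
      logb 2 (law p (fun ω => (h ω, f ω, g ω)) x / (law p (fun ω => (h ω, f ω)) (x.1, x.2.1) *
        law p (fun ω => (h ω, g ω)) (x.1, x.2.2) / law p h x.1)) := by
  set F := fun ω => (h ω, f ω, g ω)
  rw [condMutualInfo, entropy_comp_eq_sum p F fun x => (x.1, x.2.1),
    entropy_comp_eq_sum p F fun x => (x.1, x.2.2), entropy_eq_sum_law p F,
    entropy_comp_eq_sum p F fun x => x.1]
  simp only [← sum_neg_distrib, ← sum_sub_distrib, ← sum_add_distrib]
  refine sum_congr rfl fun x _ => ?_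
  rcases (law_nonneg hp F x).eq_or_lt with h0 | hpos
  · simp [← h0]
  have hhf : 0 < law p (fun ω => (h ω, f ω)) (x.1, x.2.1) :=
    law_comp_pos hp F (fun x => (x.1, x.2.1)) hpos
  have hhg : 0 < law p (fun ω => (h ω, g ω)) (x.1, x.2.2) :=
    law_comp_pos hp F (fun x => (x.1, x.2.2)) hpos
  have hh : 0 < law p h x.1 := law_comp_pos hp F (fun x => x.1) hpos
  rw [logb_div hpos.ne' (by positivity), logb_div (by positivity) hh.ne',
    logb_mul hhf.ne' hhg.ne']
  ring

lemma condMutualInfo_nonneg (hp : ∀ ω, 0 ≤ p ω) (f : Ω → α) (g : Ω → β) (h : Ω → γ) :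
    0 ≤ condMutualInfo p f g h := by
  set F := fun ω => (h ω, f ω, g ω)
  set Q : γ × α × β → ℝ := fun x => law p (fun ω => (h ω, f ω)) (x.1, x.2.1) *
    law p (fun ω => (h ω, g ω)) (x.1, x.2.2) / law p h x.1
  have hQ : ∀ x, 0 ≤ Q x := fun x =>
    div_nonneg (mul_nonneg (law_nonneg hp _ _) (law_nonneg hp _ _)) (law_nonneg hp _ _)
  have hsupp : ∀ x, law p F x ≠ 0 → Q x ≠ 0 := fun x hx => by
    have hpos := (law_nonneg hp F x).lt_of_ne hx.symm
    have := law_comp_pos hp F (fun x => (x.1, x.2.1)) hpos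
    have := law_comp_pos hp F (fun x => (x.1, x.2.2)) hpos
    have := law_comp_pos hp F (fun x => x.1) hpos
    positivity
  have hsum : ∑ x, Q x = ∑ x, law p F x := by
    simp only [Q, Fintype.sum_prod_type, ← sum_div, ← sum_mul_sum, sum_law_pair,
      mul_self_div_self]
    rw [sum_law]
  have := sum_mul_log_div_nonneg (law_nonneg hp F) hQ hsupp hsum.le
  rw [condMutualInfo_eq_sum hp]
  simp only [logb, ← mul_div_assoc, ← sum_div]
  exact div_nonneg this (log_nonneg one_le_two)

lemma condMutualInfo_eq_zero_of_law_mul (hp : ∀ ω, 0 ≤ p ω) {f : Ω → α} {g : Ω → β} {h : Ω → γ}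
    (hfg : ∀ z x y, law p (fun ω => (h ω, f ω, g ω)) (z, x, y) * law p h z =
      law p (fun ω => (h ω, f ω)) (z, x) * law p (fun ω => (h ω, g ω)) (z, y)) :
    condMutualInfo p f g h = 0 := by
  rw [condMutualInfo_eq_sum hp]
  refine sum_eq_zero fun ⟨z, x, y⟩ _ => ?_
  set F := fun ω => (h ω, f ω, g ω)
  rcases (law_nonneg hp F (z, x, y)).eq_or_lt with h0 | hpos
  · simp [← h0]
  have hh : 0 < law p h z := law_comp_pos hp F (fun x => x.1) hpos
  rw [← hfg, mul_div_cancel_right₀ _ hh.ne', div_self hpos.ne', logb_one, mul_zero]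

lemma mutualInfo_nonneg (hp : ∀ ω, 0 ≤ p ω) (hp1 : ∑ ω, p ω = 1) (f : Ω → α) (g : Ω → β) :
    0 ≤ mutualInfo p f g := by
  have h := condMutualInfo_nonneg hp f g (fun _ => ())
  have hf : entropy p (fun ω => ((), f ω)) = entropy p f := entropy_congr fun _ _ => by simp
  have hg : entropy p (fun ω => ((), g ω)) = entropy p g := entropy_congr fun _ _ => by simp
  have hfg : entropy p (fun ω => ((), f ω, g ω)) = entropy p (fun ω => (f ω, g ω)) :=
    entropy_congr fun _ _ => by simp
  rw [condMutualInfo, hf, hg, hfg, entropy_unit hp1, sub_zero] at h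
  exact h

lemma mutualInfo_comm (f : Ω → α) (g : Ω → β) : mutualInfo p f g = mutualInfo p g f := by
  have : entropy p (fun ω => (f ω, g ω)) = entropy p (fun ω => (g ω, f ω)) :=
    entropy_congr fun _ _ => by simp [and_comm]
  rw [mutualInfo, mutualInfo, this]
  ring

lemma mutualInfo_eq_of_law_eq {q : Ω' → ℝ} {f : Ω → α} {g : Ω → β} {f' : Ω' → α} {g' : Ω' → β}
    (hlaw : law q (fun z => (f' z, g' z)) = law p (fun ω => (f ω, g ω))) :
    mutualInfo q f' g' = mutualInfo p f g := by
  have hf : entropy q f' = entropy p f := entropy_comp_eq_of_law_eq hlaw Prod.fst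
  have hg : entropy q g' = entropy p g := entropy_comp_eq_of_law_eq hlaw Prod.snd
  rw [mutualInfo, mutualInfo, hf, hg, entropy_eq_of_law_eq hlaw]

lemma condMutualInfo_eq_of_law_eq {q : Ω' → ℝ} {f : Ω → α} {g : Ω → β} {h : Ω → γ}
    {f' : Ω' → α} {g' : Ω' → β} {h' : Ω' → γ}
    (hlaw : law q (fun z => (h' z, f' z, g' z)) = law p (fun ω => (h ω, f ω, g ω))) :
    condMutualInfo q f' g' h' = condMutualInfo p f g h := by
  have hf : entropy q (fun z => (h' z, f' z)) = entropy p (fun ω => (h ω, f ω)) :=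
    entropy_comp_eq_of_law_eq hlaw fun x => (x.1, x.2.1)
  have hg : entropy q (fun z => (h' z, g' z)) = entropy p (fun ω => (h ω, g ω)) :=
    entropy_comp_eq_of_law_eq hlaw fun x => (x.1, x.2.2)
  have hh : entropy q h' = entropy p h := entropy_comp_eq_of_law_eq hlaw Prod.fst
  rw [condMutualInfo, condMutualInfo, hf, hg, hh, entropy_eq_of_law_eq hlaw]

lemma entropy_pair_assoc (f : Ω → α) (g : Ω → β) (h : Ω → γ) :
    entropy p (fun ω => ((f ω, g ω), h ω)) = entropy p (fun ω => (f ω, g ω, h ω)) :=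
  entropy_congr fun _ _ => by simp only [Prod.mk.injEq, and_assoc]

lemma entropy_submod (hp : ∀ ω, 0 ≤ p ω) (f : Ω → α) (g : Ω → β) (h : Ω → γ) :
    entropy p (fun ω => (f ω, g ω, h ω)) + entropy p h
      ≤ entropy p (fun ω => (f ω, h ω)) + entropy p (fun ω => (g ω, h ω)) := by
  have hI := condMutualInfo_nonneg hp f g h
  have hf : entropy p (fun ω => (h ω, f ω)) = entropy p (fun ω => (f ω, h ω)) :=
    entropy_congr fun _ _ => by simp only [Prod.mk.injEq]; tauto
  have hg : entropy p (fun ω => (h ω, g ω)) = entropy p (fun ω => (g ω, h ω)) :=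
    entropy_congr fun _ _ => by simp only [Prod.mk.injEq]; tauto
  have hfg : entropy p (fun ω => (h ω, f ω, g ω)) = entropy p (fun ω => (f ω, g ω, h ω)) :=
    entropy_congr fun _ _ => by simp only [Prod.mk.injEq]; tauto
  rw [condMutualInfo, hf, hg, hfg] at hI
  linarith

end Information

/-- Two draws from `p` that agree on `K` and are independent given `K`. -/
noncomputable def condCopy {Ω κ : Type*} [Fintype Ω] (p : Ω → ℝ) (K : Ω → κ) (z : Ω × Ω) : ℝ :=
  letI := Classical.decEq κ
  if K z.1 = K z.2 then p z.1 * p z.2 / law p K (K z.1) else 0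

section CondCopy

variable {Ω κ α β : Type*} [Fintype Ω] {p : Ω → ℝ} {K : Ω → κ}

lemma condCopy_nonneg (hp : ∀ ω, 0 ≤ p ω) (z : Ω × Ω) : 0 ≤ condCopy p K z := by
  unfold condCopy
  split_ifs
  · exact div_nonneg (mul_nonneg (hp _) (hp _)) (law_nonneg hp _ _)
  · rfl

lemma key_eq_of_condCopy_ne_zero {z : Ω × Ω} (hz : condCopy p K z ≠ 0) : K z.1 = K z.2 := by
  by_contra h
  exact hz (by simp [condCopy, h])

lemma condCopy_swap (ω₁ ω₂ : Ω) : condCopy p K (ω₂, ω₁) = condCopy p K (ω₁, ω₂) := by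
  unfold condCopy
  split_ifs with h₁ h₂ h₂
  · simp only at h₁ ⊢
    rw [h₁, mul_comm]
  · exact absurd h₁.symm h₂
  · exact absurd h₂.symm h₁
  · rfl

lemma sum_condCopy (hp : ∀ ω, 0 ≤ p ω) (ω₁ : Ω) : ∑ ω₂, condCopy p K (ω₁, ω₂) = p ω₁ := by
  classical
  calc ∑ ω₂, condCopy p K (ω₁, ω₂)
        = ∑ ω₂, p ω₁ / law p K (K ω₁) * (if K ω₂ = K ω₁ then p ω₂ else 0) := by
          refine sum_congr rfl fun ω₂ _ => ?_
          unfold condCopy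
          split_ifs with h₁ h₂ h₂
          · ring
          · exact absurd h₁.symm h₂
          · exact absurd h₂.symm h₁
          · simp
    _ = p ω₁ / law p K (K ω₁) * law p K (K ω₁) := by rw [← mul_sum, ← law_apply]
    _ = p ω₁ := div_mul_cancel_of_imp fun h => le_antisymm (h ▸ le_law hp K ω₁) (hp ω₁)

lemma law_condCopy_fst (hp : ∀ ω, 0 ≤ p ω) : law (condCopy p K) Prod.fst = p := by
  classical
  ext ω
  rw [law_apply, Fintype.sum_prod_type, sum_eq_single ω (fun _ _ h => by simp [h]) (by simp)]
  simpa using sum_condCopy hp ω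

lemma law_condCopy_snd (hp : ∀ ω, 0 ≤ p ω) : law (condCopy p K) Prod.snd = p := by
  classical
  ext ω
  rw [law_apply, Fintype.sum_prod_type, sum_comm,
    sum_eq_single ω (fun _ _ h => by simp [h]) (by simp)]
  simpa [condCopy_swap _ ω] using sum_condCopy hp ω

lemma law_condCopy (U : Ω → α) (V : Ω → β) (k : κ) (u : α) (v : β) :
    law (condCopy p K) (fun z => (K z.1, U z.1, V z.2)) (k, u, v) =
      law p (fun ω => (K ω, U ω)) (k, u) * law p (fun ω => (K ω, V ω)) (k, v) / law p K k := by
  classical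
  rw [law_apply, law_apply, law_apply, sum_mul_sum, sum_div, Fintype.sum_prod_type]
  refine sum_congr rfl fun ω₁ _ => ?_
  rw [sum_div]
  refine sum_congr rfl fun ω₂ _ => ?_
  unfold condCopy
  simp only [Prod.mk.injEq]
  split_ifs <;> simp_all

lemma law_condCopy_comp_fst (hp : ∀ ω, 0 ≤ p ω) (G : Ω → α) :
    law (condCopy p K) (fun z => G z.1) = law p G := by
  rw [law_comp _ Prod.fst G, law_condCopy_fst hp]

lemma law_condCopy_comp_snd (hp : ∀ ω, 0 ≤ p ω) (G : Ω → α) :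
    law (condCopy p K) (fun z => G z.2) = law p G := by
  rw [law_comp _ Prod.snd G, law_condCopy_snd hp]

lemma law_condCopy_comp_key_snd (hp : ∀ ω, 0 ≤ p ω) (G : κ → Ω → α) :
    law (condCopy p K) (fun z => G (K z.1) z.2) = law p (fun ω => G (K ω) ω) := by
  rw [law_congr_ae (g := fun z => G (K z.2) z.2) fun z hz => by
    rw [key_eq_of_condCopy_ne_zero hz]]
  exact law_condCopy_comp_snd hp fun ω => G (K ω) ω

lemma condMutualInfo_condCopy [Fintype κ] [Fintype α] [Fintype β] (hp : ∀ ω, 0 ≤ p ω)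
    (U : Ω → α) (V : Ω → β) :
    condMutualInfo (condCopy p K) (fun z => U z.1) (fun z => V z.2) (fun z => K z.1) = 0 := by
  refine condMutualInfo_eq_zero_of_law_mul (condCopy_nonneg hp) fun k u v => ?_
  rw [law_condCopy, law_condCopy_comp_fst hp K, law_condCopy_comp_fst hp fun ω => (K ω, U ω),
    law_condCopy_comp_key_snd hp fun k ω => (k, V ω)]
  exact div_mul_cancel_of_imp fun h => by
    rw [law_eq_zero_of_comp hp (fun ω => (K ω, U ω)) Prod.fst h, zero_mul]

end CondCopy

lemma two_mutualInfo_le {Ω α β γ δ ε : Type*} [Fintype Ω] [Fintype α] [Fintype β] [Fintype γ]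
    [Fintype δ] [Fintype ε] {p : Ω → ℝ} (hp : ∀ ω, 0 ≤ p ω)
    (a : Ω → α) (b : Ω → β) (c : Ω → γ) (d : Ω → δ) (e : Ω → ε) :
    2 * mutualInfo p c d ≤ condMutualInfo p c d a + condMutualInfo p c d b + mutualInfo p a b
      + 2 * condMutualInfo p c d e + mutualInfo p e (fun ω => (c ω, d ω))
      + 3 * condMutualInfo p (fun ω => (a ω, b ω)) e (fun ω => (c ω, d ω)) := by
  -- The right side minus the left side is exactly the sum of these eleven Shannon quantities.
  have := entropy_submod hp e a c
  have := entropy_submod hp e a d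
  have := entropy_submod hp e a fun ω => (b ω, c ω, d ω)
  have := entropy_submod hp e b c
  have := entropy_submod hp e b d
  have := condMutualInfo_nonneg hp b e fun ω => ((c ω, d ω), a ω)
  have := entropy_submod hp e c fun ω => (d ω, a ω, b ω)
  have := entropy_submod hp e d fun ω => (a ω, b ω)
  have := condMutualInfo_nonneg hp a b e
  have := condMutualInfo_nonneg hp c d fun ω => (e ω, a ω)
  have := condMutualInfo_nonneg hp c d fun ω => (e ω, b ω)
  have : entropy p (fun ω => (c ω, d ω, a ω)) = entropy p (fun ω => (a ω, c ω, d ω)) :=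
    entropy_congr fun _ _ => by simp only [Prod.mk.injEq]; tauto
  have : entropy p (fun ω => (c ω, d ω, e ω)) = entropy p (fun ω => (e ω, c ω, d ω)) :=
    entropy_congr fun _ _ => by simp only [Prod.mk.injEq]; tauto
  have : entropy p (fun ω => (c ω, d ω, a ω, b ω)) = entropy p (fun ω => (a ω, b ω, c ω, d ω)) :=
    entropy_congr fun _ _ => by simp only [Prod.mk.injEq]; tauto
  have : entropy p (fun ω => (c ω, d ω, a ω, e ω)) = entropy p (fun ω => (e ω, a ω, c ω, d ω)) :=
    entropy_congr fun _ _ => by simp only [Prod.mk.injEq]; tauto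
  have : entropy p (fun ω => (e ω, c ω, d ω, a ω, b ω)) =
      entropy p (fun ω => (e ω, a ω, b ω, c ω, d ω)) :=
    entropy_congr fun _ _ => by simp only [Prod.mk.injEq]; tauto
  have : entropy p (fun ω => (c ω, d ω, a ω, b ω, e ω)) =
      entropy p (fun ω => (e ω, a ω, b ω, c ω, d ω)) :=
    entropy_congr fun _ _ => by simp only [Prod.mk.injEq]; tauto
  have : entropy p (fun ω => (c ω, d ω, (a ω, b ω), e ω)) =
      entropy p (fun ω => (e ω, a ω, b ω, c ω, d ω)) :=
    entropy_congr fun _ _ => by simp only [Prod.mk.injEq]; tauto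
  simp only [mutualInfo, condMutualInfo, entropy_pair_assoc] at *
  linarith

theorem zhang_yeung_inequality {Ω α β γ δ : Type*} [Fintype Ω] [Fintype α] [Fintype β]
    [Fintype γ] [Fintype δ] {p : Ω → ℝ} (hp : ∀ ω, 0 ≤ p ω)
    (A : Ω → α) (B : Ω → β) (C : Ω → γ) (D : Ω → δ) :
    2 * mutualInfo p C D ≤ 3 * condMutualInfo p C D A + condMutualInfo p C D B
      + mutualInfo p A B + mutualInfo p A (fun ω => (C ω, D ω)) := by
  set q := condCopy p fun ω => (C ω, D ω)
  have key := two_mutualInfo_le (condCopy_nonneg hp (K := fun ω => (C ω, D ω)))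
    (fun z => A z.1) (fun z => B z.1) (fun z => C z.1) (fun z => D z.1) (fun z => A z.2)
  have hcopy : law q (fun z => (A z.2, C z.1, D z.1)) = law p (fun ω => (A ω, C ω, D ω)) :=
    law_condCopy_comp_key_snd hp fun k ω => (A ω, k)
  rw [mutualInfo_eq_of_law_eq (law_condCopy_comp_fst hp fun ω => (C ω, D ω)),
    condMutualInfo_eq_of_law_eq (law_condCopy_comp_fst hp fun ω => (A ω, C ω, D ω)),
    condMutualInfo_eq_of_law_eq (law_condCopy_comp_fst hp fun ω => (B ω, C ω, D ω)),
    mutualInfo_eq_of_law_eq (law_condCopy_comp_fst hp fun ω => (A ω, B ω)),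
    condMutualInfo_eq_of_law_eq hcopy, mutualInfo_eq_of_law_eq hcopy,
    condMutualInfo_condCopy hp (fun ω => (A ω, B ω)) A] at key
  linarith

theorem zhang_yeung_entropic_bound_general {Ω α β γ δ ε : Type*} [Fintype Ω]
    [Fintype α] [Fintype β] [Fintype γ] [Fintype δ] [Fintype ε]
    (p : Ω → ℝ) (hp : ∀ ω, 0 ≤ p ω) (hp1 : ∑ ω, p ω = 1)
    (A : Ω → α) (B : Ω → β) (X : Ω → γ) (Y : Ω → δ) (C : Ω → ε)
    (t : ℝ) (ht : 0 ≤ t)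
    (hXY : entropy p (fun ω => (X ω, Y ω)) ≤ 3 * t)
    (hAX : entropy p (fun ω => (A ω, X ω)) ≤ 3 * t)
    (hAY : entropy p (fun ω => (A ω, Y ω)) ≤ 3 * t)
    (hBX : entropy p (fun ω => (B ω, X ω)) ≤ 3 * t)
    (hBY : entropy p (fun ω => (B ω, Y ω)) ≤ 3 * t)
    (hC : entropy p C ≤ 2 * t)
    (hAB : condEntropy p (fun ω => (A ω, B ω, X ω, Y ω, C ω)) (fun ω => (A ω, B ω)) = 0)
    (hAXY : condEntropy p (fun ω => (A ω, B ω, X ω, Y ω, C ω)) (fun ω => (A ω, X ω, Y ω)) = 0)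
    (hBXY : condEntropy p (fun ω => (A ω, B ω, X ω, Y ω, C ω)) (fun ω => (B ω, X ω, Y ω)) = 0)
    (hXC : condEntropy p (fun ω => (A ω, B ω, X ω, Y ω, C ω)) (fun ω => (X ω, C ω)) = 0)
    (hYC : condEntropy p (fun ω => (A ω, B ω, X ω, Y ω, C ω)) (fun ω => (Y ω, C ω)) = 0) :
    entropy p (fun ω => (A ω, B ω, X ω, Y ω, C ω)) ≤ (43 / 11) * t := by
  set F := fun ω => (A ω, B ω, X ω, Y ω, C ω)
  have eAB : entropy p F = entropy p (fun ω => (A ω, B ω)) :=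
    entropy_eq_of_condEntropy_eq_zero F (fun x => (x.1, x.2.1)) hAB
  have eAXY : entropy p F = entropy p (fun ω => (A ω, X ω, Y ω)) :=
    entropy_eq_of_condEntropy_eq_zero F (fun x => (x.1, x.2.2.1, x.2.2.2.1)) hAXY
  have eBXY : entropy p F = entropy p (fun ω => (B ω, X ω, Y ω)) :=
    entropy_eq_of_condEntropy_eq_zero F (fun x => (x.2.1, x.2.2.1, x.2.2.2.1)) hBXY
  have eXC : entropy p F = entropy p (fun ω => (X ω, C ω)) :=
    entropy_eq_of_condEntropy_eq_zero F (fun x => (x.2.2.1, x.2.2.2.2)) hXC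
  have eYC : entropy p F = entropy p (fun ω => (Y ω, C ω)) :=
    entropy_eq_of_condEntropy_eq_zero F (fun x => (x.2.2.2.1, x.2.2.2.2)) hYC
  have zy₁ := zhang_yeung_inequality hp A B X Y
  have zy₂ := zhang_yeung_inequality hp B A X Y
  rw [mutualInfo_comm B A] at zy₂
  have iAB := mutualInfo_nonneg hp hp1 A B
  have iXC := mutualInfo_nonneg hp hp1 X C
  have iYC := mutualInfo_nonneg hp hp1 Y C
  simp only [mutualInfo, condMutualInfo] at zy₁ zy₂ iAB iXC iYC
  linarith

/-- If the marginal entropies of `(X,Y), (A,X), (A,Y), (B,X), (B,Y)` are at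
most `3t`, that of `C` is at most `2t`, and the six listed conditional
entropies of the full tuple vanish, then `H[A,B,X,Y,C] ≤ (43/11)·t`. -/
theorem zhang_yeung_entropic_bound {Ω α β γ δ ε : Type*} [Fintype Ω]
    [Fintype α] [Fintype β] [Fintype γ] [Fintype δ] [Fintype ε]
    (p : Ω → ℝ) (hp : ∀ ω, 0 ≤ p ω) (hp1 : ∑ ω, p ω = 1)
    (A : Ω → α) (B : Ω → β) (X : Ω → γ) (Y : Ω → δ) (C : Ω → ε)
    (t : ℝ) (ht : 0 ≤ t)
    (hXY : entropy p (fun ω => (X ω, Y ω)) ≤ 3 * t)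
    (hAX : entropy p (fun ω => (A ω, X ω)) ≤ 3 * t)
    (hAY : entropy p (fun ω => (A ω, Y ω)) ≤ 3 * t)
    (hBX : entropy p (fun ω => (B ω, X ω)) ≤ 3 * t)
    (hBY : entropy p (fun ω => (B ω, Y ω)) ≤ 3 * t)
    (hC : entropy p C ≤ 2 * t)
    (hAB : condEntropy p (fun ω => (A ω, B ω, X ω, Y ω, C ω)) (fun ω => (A ω, B ω)) = 0)
    (hAXY : condEntropy p (fun ω => (A ω, B ω, X ω, Y ω, C ω)) (fun ω => (A ω, X ω, Y ω)) = 0)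
    (hBXY : condEntropy p (fun ω => (A ω, B ω, X ω, Y ω, C ω)) (fun ω => (B ω, X ω, Y ω)) = 0)
    (hAC : condEntropy p (fun ω => (A ω, B ω, X ω, Y ω, C ω)) (fun ω => (A ω, C ω)) = 0)
    (hXC : condEntropy p (fun ω => (A ω, B ω, X ω, Y ω, C ω)) (fun ω => (X ω, C ω)) = 0)
    (hYC : condEntropy p (fun ω => (A ω, B ω, X ω, Y ω, C ω)) (fun ω => (Y ω, C ω)) = 0) :
    entropy p (fun ω => (A ω, B ω, X ω, Y ω, C ω)) ≤ (43 / 11) * t :=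
  zhang_yeung_entropic_bound_general p hp hp1 A B X Y C t ht hXY hAX hAY hBX hBY hC hAB hAXY hBXY
    hXC hYC
end

section
/- There exists a nonnegative, monotone, submodular set function h on the subsets of the 5-element set {A, B, X, Y, C} with h(∅) = 0 such that h({X,Y}) = h({A,X}) = h({A,Y}) = h({B,X}) = h({B,Y}) = 3, h({C}) = 2, and h({A,B}) = h({A,X,Y}) = h({B,X,Y}) = h({A,C}) = h({X,C}) = h({Y,C}) = h({A,B,X,Y,C}) = 4. (In particular, h satisfies the cardinality constraints h(edge) ≤ 3 and h({C}) ≤ 2, satisfies the six functional-dependency constraints h({A,B,X,Y,C}) ≤ h(K) for each key set K among {A,B}, {A,X,Y}, {B,X,Y}, {A,C}, {X,C}, {Y,C}, yet attains value 4 on the full set.) -/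
def pgwF (S : Finset (Fin 5)) : ℕ :=
  if S = ∅ then 0
  else if S.card = 1 then 2
  else if S ∈ ({{2,3},{0,2},{0,3},{1,2},{1,3}} : Finset (Finset (Fin 5))) then 3
  else 4

/-- **Claim 2 for the Zhang–Yeung query.** There is a nonnegative, monotone,
submodular set function (polymatroid) on the 5-element ground set
`{A, B, X, Y, C}` (encoded as `Fin 5` with `A = 0`, `B = 1`, `X = 2`,
`Y = 3`, `C = 4`) taking value 3 on each of `{X,Y}, {A,X}, {A,Y}, {B,X},
{B,Y}`, value 2 on `{C}`, and value 4 on each of `{A,B}, {A,X,Y}, {B,X,Y},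
{A,C}, {X,C}, {Y,C}` and on the full set. -/
theorem polymatroid_gap_witness :
    ∃ h : Finset (Fin 5) → ℝ,
      h ∅ = 0 ∧
      (∀ S : Finset (Fin 5), 0 ≤ h S) ∧
      (∀ ⦃S T : Finset (Fin 5)⦄, S ⊆ T → h S ≤ h T) ∧
      (∀ S T : Finset (Fin 5), h (S ∪ T) + h (S ∩ T) ≤ h S + h T) ∧
      h {2, 3} = 3 ∧ h {0, 2} = 3 ∧ h {0, 3} = 3 ∧ h {1, 2} = 3 ∧ h {1, 3} = 3 ∧
      h {4} = 2 ∧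
      h {0, 1} = 4 ∧ h {0, 2, 3} = 4 ∧ h {1, 2, 3} = 4 ∧
      h {0, 4} = 4 ∧ h {2, 4} = 4 ∧ h {3, 4} = 4 ∧
      h Finset.univ = 4 := by
  refine ⟨fun S => (pgwF S : ℝ), by norm_num [pgwF], fun S => by positivity, ?_, ?_, ?_⟩
  · intro S T hST
    have : pgwF S ≤ pgwF T := by revert hST; revert S T; decide
    dsimp only; exact_mod_cast this
  · intro S T
    have : pgwF (S ∪ T) + pgwF (S ∩ T) ≤ pgwF S + pgwF T := by revert S T; decide
    dsimp only; exact_mod_cast this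
  · refine ⟨?_, ?_, ?_, ?_, ?_, ?_, ?_, ?_, ?_, ?_, ?_, ?_, ?_⟩ <;>
      · dsimp only; norm_cast
end

section
/- There exists a nonnegative, monotone, submodular set function h on the subsets of the 8-element set {A, B, X, Y, A', B', X', Y'} with h(∅) = 0 such that h(e) ≤ 3 for each of the ten sets e ∈ {{X,Y}, {A,X}, {A,Y}, {B,X}, {B,Y}, {X',Y'}, {A',X'}, {A',Y'}, {B',X'}, {B',Y'}}, and h(T) ≥ 4 for each of the fifteen sets T ∈ {{A,B}, {A,X,Y}, {B,X,Y}, {A',B'}, {A',X',Y'}, {B',X',Y'}, {A',A}, {X',A}, {Y',A}, {A',X}, {X',X}, {Y',X}, {A',Y}, {X',Y}, {Y',Y}}. -/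
/-- Rank of the four lines `A,B,X,Y` of the Vámos matroid: the Shannon-type
bound violator on one group. -/
def vamosG (S : Finset (Fin 4)) : ℕ :=
  if S = ∅ then 0 else if S.card = 1 then 2 else if S = {0,1} then 4
  else if S.card = 2 then 3 else 4

lemma vamosG_mono : ∀ S T : Finset (Fin 4), S ⊆ T → vamosG S ≤ vamosG T := by decide

lemma vamosG_submod :
    ∀ S T : Finset (Fin 4), vamosG (S ∪ T) + vamosG (S ∩ T) ≤ vamosG S + vamosG T := by
  decide

/-- First group (elements 0–3) of a subset of `Fin 8`. -/
def gpart1 (S : Finset (Fin 8)) : Finset (Fin 4) :=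
  Finset.univ.filter (fun i => (i.castLE (by norm_num) : Fin 8) ∈ S)

/-- Second group (elements 4–7) of a subset of `Fin 8`. -/
def gpart2 (S : Finset (Fin 8)) : Finset (Fin 4) :=
  Finset.univ.filter (fun i => (i.addNat 4 : Fin 8) ∈ S)

lemma gpart1_union (S T : Finset (Fin 8)) : gpart1 (S ∪ T) = gpart1 S ∪ gpart1 T := by
  simp [gpart1, Finset.filter_or, Finset.mem_union]

lemma gpart1_inter (S T : Finset (Fin 8)) : gpart1 (S ∩ T) = gpart1 S ∩ gpart1 T := by
  simp [gpart1, Finset.filter_and, Finset.mem_inter]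

lemma gpart2_union (S T : Finset (Fin 8)) : gpart2 (S ∪ T) = gpart2 S ∪ gpart2 T := by
  simp [gpart2, Finset.filter_or, Finset.mem_union]

lemma gpart2_inter (S T : Finset (Fin 8)) : gpart2 (S ∩ T) = gpart2 S ∩ gpart2 T := by
  simp [gpart2, Finset.filter_and, Finset.mem_inter]

lemma gpart1_mono {S T : Finset (Fin 8)} (hST : S ⊆ T) : gpart1 S ⊆ gpart1 T := by
  intro i hi
  simp only [gpart1, Finset.mem_filter, Finset.mem_univ, true_and] at hi ⊢
  exact hST hi

lemma gpart2_mono {S T : Finset (Fin 8)} (hST : S ⊆ T) : gpart2 S ⊆ gpart2 T := by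
  intro i hi
  simp only [gpart2, Finset.mem_filter, Finset.mem_univ, true_and] at hi ⊢
  exact hST hi

/-- Direct sum of two copies of the Vámos polymatroid, as a natural number. -/
def hNat (S : Finset (Fin 8)) : ℕ := vamosG (gpart1 S) + vamosG (gpart2 S)

/-- There is a nonnegative, monotone, submodular set function (polymatroid) on
the 8-element ground set `{A, B, X, Y, A', B', X', Y'}` (encoded as `Fin 8`
with `A = 0`, `B = 1`, `X = 2`, `Y = 3`, `A' = 4`, `B' = 5`, `X' = 6`,
`Y' = 7`) taking value at most 3 on each of the ten listed pairs and value at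
least 4 on each of the fifteen listed target sets. -/
theorem polymatroid_gap_witness_eight :
    ∃ h : Finset (Fin 8) → ℝ,
      h ∅ = 0 ∧
      (∀ S : Finset (Fin 8), 0 ≤ h S) ∧
      (∀ ⦃S T : Finset (Fin 8)⦄, S ⊆ T → h S ≤ h T) ∧
      (∀ S T : Finset (Fin 8), h (S ∪ T) + h (S ∩ T) ≤ h S + h T) ∧
      -- edge constraints: h(e) ≤ 3
      h {2, 3} ≤ 3 ∧ h {0, 2} ≤ 3 ∧ h {0, 3} ≤ 3 ∧ h {1, 2} ≤ 3 ∧ h {1, 3} ≤ 3 ∧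
      h {6, 7} ≤ 3 ∧ h {4, 6} ≤ 3 ∧ h {4, 7} ≤ 3 ∧ h {5, 6} ≤ 3 ∧ h {5, 7} ≤ 3 ∧
      -- target constraints: h(T) ≥ 4
      4 ≤ h {0, 1} ∧ 4 ≤ h {0, 2, 3} ∧ 4 ≤ h {1, 2, 3} ∧
      4 ≤ h {4, 5} ∧ 4 ≤ h {4, 6, 7} ∧ 4 ≤ h {5, 6, 7} ∧
      4 ≤ h {4, 0} ∧ 4 ≤ h {6, 0} ∧ 4 ≤ h {7, 0} ∧
      4 ≤ h {4, 2} ∧ 4 ≤ h {6, 2} ∧ 4 ≤ h {7, 2} ∧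
      4 ≤ h {4, 3} ∧ 4 ≤ h {6, 3} ∧ 4 ≤ h {7, 3} := by
  refine ⟨fun S => (hNat S : ℝ), ?_, fun S => by positivity, ?_, ?_, ?_⟩
  · norm_num [show hNat ∅ = 0 from by decide]
  · intro S T hST
    have : hNat S ≤ hNat T :=
      Nat.add_le_add (vamosG_mono _ _ (gpart1_mono hST)) (vamosG_mono _ _ (gpart2_mono hST))
    beta_reduce
    exact_mod_cast this
  · intro S T
    have : hNat (S ∪ T) + hNat (S ∩ T) ≤ hNat S + hNat T := by
      unfold hNat
      rw [gpart1_union, gpart1_inter, gpart2_union, gpart2_inter]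
      have h1 := vamosG_submod (gpart1 S) (gpart1 T)
      have h2 := vamosG_submod (gpart2 S) (gpart2 T)
      omega
    beta_reduce
    exact_mod_cast this
  · repeat' apply And.intro
    all_goals beta_reduce
    all_goals norm_cast
end

section
/- Let n be a positive integer, let D₁,…,D_n be sets, let T be a finite set of tuples in D₁ × ⋯ × D_n, and let 𝓑 be a nonempty finite family of subsets of [n]. For B ⊆ [n], let Π_B denote projection of a tuple onto the coordinates in B. Then there exists a subset T̄ ⊆ T such that: (i) for every B ∈ 𝓑 the projection Π_B is injective on T̄ (hence |Π_B(T̄)| = |T̄| for every B ∈ 𝓑); and (ii) for every tuple t ∈ T there exists B ∈ 𝓑 with Π_B(t) ∈ Π_B(T̄). -/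
/-- **Maximal matching construction for disjunctive datalog rules.**
Given a finite set `T` of tuples in `D₁ × ⋯ × D_n` and a nonempty finite
family `𝓑` of subsets of `[n]`, there is a subset `T̄ ⊆ T` such that:
(i) for every `B ∈ 𝓑`, the projection onto the coordinates in `B` is
injective on `T̄`; and (ii) every tuple of `T` agrees, on the coordinates of
some `B ∈ 𝓑`, with some tuple of `T̄`. -/
theorem disjunctive_rule_model_selection {n : ℕ} (hn : 0 < n)
    {D : Fin n → Type*}
    (T : Finset ((i : Fin n) → D i))
    (𝓑 : Finset (Finset (Fin n))) (h𝓑 : 𝓑.Nonempty) :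
    ∃ Tbar ⊆ T,
      (∀ B ∈ 𝓑, ∀ t ∈ Tbar, ∀ t' ∈ Tbar,
        (fun i : {x // x ∈ B} => t i.1) = (fun i : {x // x ∈ B} => t' i.1) →
          t = t') ∧
      (∀ t ∈ T, ∃ B ∈ 𝓑, ∃ t' ∈ Tbar,
        (fun i : {x // x ∈ B} => t i.1) = (fun i : {x // x ∈ B} => t' i.1)) := by
  classical
  set P : Finset ((i : Fin n) → D i) → Prop := fun S =>
    ∀ B ∈ 𝓑, ∀ t ∈ S, ∀ t' ∈ S,
      (fun i : {x // x ∈ B} => t i.1) = (fun i : {x // x ∈ B} => t' i.1) → t = t'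
    with hP
  have hSne : (T.powerset.filter P).Nonempty := by
    refine ⟨∅, ?_⟩
    simp [hP]
  obtain ⟨Tbar, hTbarS, hmax⟩ :=
    (T.powerset.filter P).exists_max_image Finset.card hSne
  rw [Finset.mem_filter, Finset.mem_powerset] at hTbarS
  refine ⟨Tbar, hTbarS.1, hTbarS.2, ?_⟩
  intro t ht
  by_contra hcon
  push_neg at hcon
  have htn : t ∉ Tbar := by
    intro htb
    obtain ⟨B, hB⟩ := h𝓑
    exact hcon B hB t htb rfl
  have hins : insert t Tbar ∈ T.powerset.filter P := by
    rw [Finset.mem_filter, Finset.mem_powerset]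
    refine ⟨Finset.insert_subset ht hTbarS.1, ?_⟩
    intro B hB a ha a' ha' heq
    rcases Finset.mem_insert.mp ha with h1 | h1
    · rcases Finset.mem_insert.mp ha' with h2 | h2
      · rw [h1, h2]
      · subst h1; exact absurd heq (hcon B hB a' h2)
    · rcases Finset.mem_insert.mp ha' with h2 | h2
      · subst h2; exact absurd heq.symm (hcon B hB a h1)
      · exact hTbarS.2 B hB a h1 a' h2 heq
  have := hmax _ hins
  have : Tbar.card < (insert t Tbar).card := by
    rw [Finset.card_insert_of_notMem htn]; omega
  omega
end

section
/- Let X ⊂ Y be finite index sets, let (D_i)_{i∈Y} be sets, and let T be a nonempty finite set of tuples in Π_{i∈Y} D_i. For a subset S ⊆ T and a tuple t_X ∈ Π_{i∈X} D_i, let deg_S(t_X) := |{ s ∈ S : Π_X(s) = t_X }|. Then T can be partitioned into at most 2·(⌊log₂|T|⌋ + 1) pairwise disjoint sub-tables T⁽¹⁾,…,T⁽ᵏ⁾ whose union is T, such that for every j, |Π_X(T⁽ʲ⁾)| · max_{t_X ∈ Π_X(T⁽ʲ⁾)} deg_{T⁽ʲ⁾}(t_X) ≤ |T|. -/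
open scoped Classical

/-!
Sort the tuples of `T` by the dyadic level `j = ⌊log₂ (|T| / deg_T(Π_X t))⌋ ≤ ⌊log₂ |T|⌋` of the
degree of their projection. A projection at level `j` has degree in `(|T| / 2^(j+1), |T| / 2^j]`;
since the degrees of distinct projections add up to at most `|T|`, level `j` has fewer than
`2^(j+1)` projections. Splitting them into two halves of at most `2^j` projections each gives
parts with at most `2^j` projections of degree at most `|T| / 2^j`.
-/

open Finset

section DegreePartition

variable {α β : Type*} [DecidableEq β]

lemma Finset.exists_subset_card_le_and_card_sdiff_le {s : Finset β} {m : ℕ} (hs : #s ≤ 2 * m) :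
    ∃ A ⊆ s, #A ≤ m ∧ #(s \ A) ≤ m := by
  obtain ⟨A, hAs, hA⟩ := exists_subset_card_eq (min_le_right m #s)
  refine ⟨A, hAs, hA ▸ min_le_left _ _, ?_⟩
  rw [card_sdiff_of_subset hAs, hA]
  omega

def projDegree (p : α → β) (S : Finset α) (b : β) : ℕ := #{s ∈ S | p s = b}

variable (p : α → β) (T : Finset α)

lemma projDegree_pos {t : α} (ht : t ∈ T) : 0 < projDegree p T (p t) :=
  card_pos.2 ⟨t, mem_filter.2 ⟨ht, rfl⟩⟩

lemma projDegree_le_card (b : β) : projDegree p T b ≤ #T := card_filter_le _ _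

lemma projDegree_mono {S : Finset α} (hST : S ⊆ T) (b : β) :
    projDegree p S b ≤ projDegree p T b :=
  card_le_card (filter_subset_filter _ hST)

lemma sum_projDegree_le_card (B : Finset β) : ∑ b ∈ B, projDegree p T b ≤ #T :=
  (sum_card_fiberwise_eq_card_filter T B p).trans_le (card_filter_le _ _)

lemma card_lt_of_card_lt_mul_projDegree {B : Finset β} {m : ℕ} (hm : 0 < m)
    (hB : ∀ b ∈ B, #T < m * projDegree p T b) : #B < m := by
  have : #B * (#T + 1) ≤ m * #T :=
    calc #B * (#T + 1) ≤ ∑ b ∈ B, m * projDegree p T b := by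
          rw [← smul_eq_mul]; exact card_nsmul_le_sum _ _ _ hB
      _ = m * ∑ b ∈ B, projDegree p T b := (mul_sum _ _ _).symm
      _ ≤ m * #T := Nat.mul_le_mul_left _ (sum_projDegree_le_card p T B)
  by_contra! h
  nlinarith

lemma card_image_mul_sup_projDegree_le {S : Finset α} (hST : S ⊆ T) {m : ℕ} (hm : 0 < m)
    (hcard : #(S.image p) ≤ m) (hdeg : ∀ t ∈ S, m * projDegree p T (p t) ≤ #T) :
    #(S.image p) * (S.image p).sup (projDegree p S) ≤ #T := by
  have hsup : (S.image p).sup (projDegree p S) ≤ #T / m := by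
    refine Finset.sup_le fun b hb => ?_
    obtain ⟨t, ht, rfl⟩ := mem_image.1 hb
    rw [Nat.le_div_iff_mul_le hm, mul_comm]
    exact (Nat.mul_le_mul_left m (projDegree_mono p T hST _)).trans (hdeg t ht)
  calc #(S.image p) * (S.image p).sup (projDegree p S) ≤ m * (#T / m) :=
        Nat.mul_le_mul hcard hsup
    _ ≤ #T := Nat.mul_div_le _ _

def degreeLevel (t : α) : ℕ := Nat.log 2 (#T / projDegree p T (p t))

lemma degreeLevel_le_log (t : α) : degreeLevel p T t ≤ Nat.log 2 #T :=
  Nat.log_mono_right (Nat.div_le_self _ _)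

lemma pow_degreeLevel_mul_projDegree_le {t : α} (ht : t ∈ T) :
    2 ^ degreeLevel p T t * projDegree p T (p t) ≤ #T := by
  have hd := projDegree_pos p T ht
  rw [← Nat.le_div_iff_mul_le hd]
  exact Nat.pow_log_le_self 2 (Nat.div_pos (projDegree_le_card p T _) hd).ne'

lemma card_lt_pow_succ_degreeLevel_mul_projDegree {t : α} (ht : t ∈ T) :
    #T < 2 ^ (degreeLevel p T t + 1) * projDegree p T (p t) :=
  (Nat.div_lt_iff_lt_mul (projDegree_pos p T ht)).1 (Nat.lt_pow_succ_log_self one_lt_two _)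

lemma card_image_filter_degreeLevel_lt (j : ℕ) :
    #({t ∈ T | degreeLevel p T t = j}.image p) < 2 ^ (j + 1) := by
  refine card_lt_of_card_lt_mul_projDegree p T (by positivity) fun b hb => ?_
  obtain ⟨t, ht, rfl⟩ := mem_image.1 hb
  obtain ⟨htT, rfl⟩ := mem_filter.1 ht
  exact card_lt_pow_succ_degreeLevel_mul_projDegree p T htT

theorem exists_label_card_image_mul_sup_projDegree_le :
    ∃ label : α → Fin 2 × Fin (Nat.log 2 #T + 1), ∀ c,
      #({t ∈ T | label t = c}.image p) *
        ({t ∈ T | label t = c}.image p).sup (projDegree p {t ∈ T | label t = c}) ≤ #T := by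
  have hsplit (j : ℕ) : ∃ A ⊆ {t ∈ T | degreeLevel p T t = j}.image p,
      #A ≤ 2 ^ j ∧ #({t ∈ T | degreeLevel p T t = j}.image p \ A) ≤ 2 ^ j :=
    exists_subset_card_le_and_card_sdiff_le <| by
      have := card_image_filter_degreeLevel_lt p T j
      rw [pow_succ] at this
      omega
  choose A _ hA hAc using hsplit
  let label (t : α) : Fin 2 × Fin (Nat.log 2 #T + 1) :=
    (if p t ∈ A (degreeLevel p T t) then 0 else 1,
      ⟨degreeLevel p T t, Nat.lt_succ_of_le (degreeLevel_le_log p T t)⟩)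
  refine ⟨label, fun ⟨i, j⟩ => ?_⟩
  have hmem {t : α} (ht : t ∈ {t ∈ T | label t = (i, j)}) :
      t ∈ T ∧ degreeLevel p T t = j ∧ (if p t ∈ A j then 0 else 1) = i := by
    obtain ⟨htT, hlab⟩ := mem_filter.1 ht
    obtain ⟨hi, hj⟩ := Prod.ext_iff.1 hlab
    have hj : degreeLevel p T t = j := congrArg Fin.val hj
    exact ⟨htT, hj, hj ▸ hi⟩
  refine card_image_mul_sup_projDegree_le p T (m := 2 ^ (j : ℕ)) (filter_subset _ _)
    (by positivity) ?_ fun t ht => ?_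
  · rcases i with ⟨_ | _ | _, hi⟩
    · refine (card_le_card fun b hb => ?_).trans (hA j)
      obtain ⟨t, ht, rfl⟩ := mem_image.1 hb
      obtain ⟨-, -, hi⟩ := hmem ht
      by_contra h
      simp [h] at hi
    · refine (card_le_card fun b hb => ?_).trans (hAc j)
      obtain ⟨t, ht, rfl⟩ := mem_image.1 hb
      obtain ⟨htT, hj, hi⟩ := hmem ht
      refine mem_sdiff.2 ⟨mem_image_of_mem _ (mem_filter.2 ⟨htT, hj⟩), fun h => ?_⟩
      simp [h] at hi
    · omega
  · obtain ⟨htT, hj, -⟩ := hmem ht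
    rw [← hj]
    exact pow_degreeLevel_mul_projDegree_le p T htT

end DegreePartition

theorem partition_lemma_general {ι : Type*} {D : ι → Type*}
    (X : Finset ι)
    (T : Finset ((i : ι) → D i)) :
    ∃ (k : ℕ) (parts : Fin k → Finset ((i : ι) → D i)),
      k ≤ 2 * (Nat.log 2 T.card + 1) ∧
      (∀ j j' : Fin k, j ≠ j' → Disjoint (parts j) (parts j')) ∧
      (∀ t, t ∈ T ↔ ∃ j, t ∈ parts j) ∧
      (∀ j : Fin k,
        ((parts j).image (fun t => fun i : {x // x ∈ X} => t i.1)).card *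
          ((parts j).image (fun t => fun i : {x // x ∈ X} => t i.1)).sup
            (fun tX => ((parts j).filter
              (fun s => (fun i : {x // x ∈ X} => s i.1) = tX)).card)
        ≤ T.card) := by
  obtain ⟨label, hlabel⟩ :=
    exists_label_card_image_mul_sup_projDegree_le (fun t (i : {x // x ∈ X}) => t i.1) T
  refine ⟨_, fun j => {t ∈ T | label t = finProdFinEquiv.symm j}, le_rfl, fun j j' hne => ?_,
    fun t => ⟨fun ht => ⟨finProdFinEquiv (label t), by simpa using ht⟩, fun ⟨_, ht⟩ =>
      (mem_filter.1 ht).1⟩, fun j => hlabel _⟩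
  exact disjoint_filter.2 fun t _ h h' => hne (finProdFinEquiv.symm.injective (h.symm.trans h'))

/-- **Partition lemma (degree-uniformization).**
Let `X` be a proper subset of the finite index set `ι` and `T` a nonempty
finite set of tuples over `ι`.  Then `T` can be partitioned into at most
`2·(⌊log₂ |T|⌋ + 1)` pairwise disjoint sub-tables such that for every part
`T⁽ʲ⁾`, the number of distinct `X`-projections of `T⁽ʲ⁾` times the maximum
`X`-degree within `T⁽ʲ⁾` is at most `|T|`. -/
theorem partition_lemma {ι : Type*} [Fintype ι] {D : ι → Type*}
    (X : Finset ι) (hX : X ⊂ Finset.univ)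
    (T : Finset ((i : ι) → D i)) (hT : T.Nonempty) :
    ∃ (k : ℕ) (parts : Fin k → Finset ((i : ι) → D i)),
      k ≤ 2 * (Nat.log 2 T.card + 1) ∧
      (∀ j j' : Fin k, j ≠ j' → Disjoint (parts j) (parts j')) ∧
      (∀ t, t ∈ T ↔ ∃ j, t ∈ parts j) ∧
      (∀ j : Fin k,
        ((parts j).image (fun t => fun i : {x // x ∈ X} => t i.1)).card *
          ((parts j).image (fun t => fun i : {x // x ∈ X} => t i.1)).sup
            (fun tX => ((parts j).filter
              (fun s => (fun i : {x // x ∈ X} => s i.1) = tX)).card)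
        ≤ T.card) :=
  partition_lemma_general X T
end

section
/- Let h be a nonnegative, monotone, submodular set function on the subsets of {1, 2, 3, 4} with h(∅) = 0. Then 2·h({1,2,3,4}) ≤ h({2,3}) + h({3,4}) + h({1,4}) + 2·h({1,2}) − h({1}) − h({2}). -/
/-- **Degree-aware bound for the 4-cycle (bound (b)).**
For any nonnegative, monotone, submodular set function `h` on `{1,2,3,4}`
(encoded as `Fin 4` with `1 = 0`, `2 = 1`, `3 = 2`, `4 = 3`) with `h ∅ = 0`:
`2·h({1,2,3,4}) ≤ h({2,3}) + h({3,4}) + h({1,4}) + 2·h({1,2}) − h({1}) − h({2})`. -/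
theorem four_cycle_degree_bound (h : Finset (Fin 4) → ℝ)
    (h_empty : h ∅ = 0)
    (h_nonneg : ∀ S : Finset (Fin 4), 0 ≤ h S)
    (h_mono : ∀ ⦃S T : Finset (Fin 4)⦄, S ⊆ T → h S ≤ h T)
    (h_submod : ∀ S T : Finset (Fin 4), h (S ∪ T) + h (S ∩ T) ≤ h S + h T) :
    2 * h Finset.univ ≤
      h {1, 2} + h {2, 3} + h {0, 3} + 2 * h {0, 1} - h {0} - h {1} := by
  have hA := h_submod {0,1,2} {2,3}
  have hB := h_submod {0,1} {1,2}
  have hC := h_submod {0,1,3} {2,3}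
  have hD := h_submod {0,1} {0,3}
  have hE := h_submod {2} {3}
  have e1 : ({0,1,2} : Finset (Fin 4)) ∪ {2,3} = Finset.univ := by decide
  have e2 : ({0,1,2} : Finset (Fin 4)) ∩ {2,3} = {2} := by decide
  have e3 : ({0,1} : Finset (Fin 4)) ∪ {1,2} = {0,1,2} := by decide
  have e4 : ({0,1} : Finset (Fin 4)) ∩ {1,2} = {1} := by decide
  have e5 : ({0,1,3} : Finset (Fin 4)) ∪ {2,3} = Finset.univ := by decide
  have e6 : ({0,1,3} : Finset (Fin 4)) ∩ {2,3} = {3} := by decide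
  have e7 : ({0,1} : Finset (Fin 4)) ∪ {0,3} = {0,1,3} := by decide
  have e8 : ({0,1} : Finset (Fin 4)) ∩ {0,3} = {0} := by decide
  have e9 : ({2} : Finset (Fin 4)) ∪ {3} = {2,3} := by decide
  have e10 : ({2} : Finset (Fin 4)) ∩ {3} = ∅ := by decide
  rw [e1, e2] at hA
  rw [e3, e4] at hB
  rw [e5, e6] at hC
  rw [e7, e8] at hD
  rw [e9, e10, h_empty] at hE
  linarith
end
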